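/- arXiv:2205.13498 — 4 statements merged into one kernel-verified Lean document; each statement's English description precedes it below -/
import Mathlib

section
/- A homogeneous nontrivial linear space that is not a single line is a projective plane, i.e., every two lines intersect and the space contains four points, no three of which are collinear. -/
open Set Function

universe u v w

/-- A linear space: a set of points with a family of lines, each line having at
least 2 points, such that any two distinct points lie on a common line and any
two distinct lines meet in at most one point. -/
structure LinSpace (X : Type u) where
  lines : Set (Set X)
  two_le : ∀ L ∈ lines, 2 ≤ L.encard
  exists_line : ∀ x y : X, x ≠ y → ∃ L ∈ lines, x ∈ L ∧ y ∈ L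
  inter_subsingleton : ∀ L₁ ∈ lines, ∀ L₂ ∈ lines, L₁ ≠ L₂ → (L₁ ∩ L₂).Subsingleton

/-- Collinearity of three points. -/
def Collin {X : Type u} (A : LinSpace X) (x y z : X) : Prop :=
  ∃ L ∈ A.lines, x ∈ L ∧ y ∈ L ∧ z ∈ L

/-- An embedding of linear spaces: an injection preserving and reflecting collinearity. -/
def IsEmbedding {X : Type u} {Y : Type v} (A : LinSpace X) (B : LinSpace Y) (f : X → Y) : Prop :=
  Function.Injective f ∧ ∀ x y z : X, Collin A x y z ↔ Collin B (f x) (f y) (f z)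

/-- The linear space has degree at most `n`: every line has at most `n` points
and every point lies on at most `n` lines. -/
def DegLE {X : Type u} (A : LinSpace X) (n : ℕ) : Prop :=
  (∀ L ∈ A.lines, L.encard ≤ (n : ℕ∞)) ∧
  ∀ p : X, {L | L ∈ A.lines ∧ p ∈ L}.encard ≤ (n : ℕ∞)

/-- There exist four points, no three of which are collinear. -/
def FourIndep {X : Type u} (A : LinSpace X) : Prop :=
  ∃ a b c d : X, a ≠ b ∧ a ≠ c ∧ a ≠ d ∧ b ≠ c ∧ b ≠ d ∧ c ≠ d ∧
    ∀ p q r : X, p ∈ ({a, b, c, d} : Set X) → q ∈ ({a, b, c, d} : Set X) →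
      r ∈ ({a, b, c, d} : Set X) → p ≠ q → p ≠ r → q ≠ r → ¬ Collin A p q r

/-- A projective plane: every two lines intersect, and there are four points no
three of which are collinear. -/
def IsProjPlane {X : Type u} (A : LinSpace X) : Prop :=
  (∀ L₁ ∈ A.lines, ∀ L₂ ∈ A.lines, (L₁ ∩ L₂).Nonempty) ∧ FourIndep A

/-- An automorphism of a linear space. -/
def IsAuto {X : Type u} (A : LinSpace X) (g : X → X) : Prop :=
  Function.Bijective g ∧ ∀ x y z : X, Collin A x y z ↔ Collin A (g x) (g y) (g z)

/-- A homogeneous linear space: every isomorphism between finite subspaces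
extends to an automorphism. -/
def Homogeneous {X : Type u} (A : LinSpace X) : Prop :=
  ∀ S : Set X, S.Finite → ∀ f : X → X, Set.InjOn f S →
    (∀ x ∈ S, ∀ y ∈ S, ∀ z ∈ S, (Collin A x y z ↔ Collin A (f x) (f y) (f z))) →
    ∃ g : X → X, IsAuto A g ∧ ∀ x ∈ S, g x = f x

/-- The Fano plane: the unique projective plane of order 2 (7 points, every line
has exactly 3 points). -/
def IsFano {X : Type u} (A : LinSpace X) : Prop :=
  IsProjPlane A ∧ (∀ L ∈ A.lines, L.encard = 3) ∧ (Set.univ : Set X).encard = 7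

/-- The projective plane over F₃: the unique projective plane of order 3
(13 points, every line has exactly 4 points). -/
def IsPG2_3 {X : Type u} (A : LinSpace X) : Prop :=
  IsProjPlane A ∧ (∀ L ∈ A.lines, L.encard = 4) ∧ (Set.univ : Set X).encard = 13

/-- The planar closure of a set `S` in a linear space `B`: the closure of `S`
under adding intersection points of pairs of lines spanned by the closure. -/
inductive PlanarCl {Y : Type v} (B : LinSpace Y) (S : Set Y) : Y → Prop
  | base {p : Y} (hp : p ∈ S) : PlanarCl B S p
  | inter {p : Y} (L₁ L₂ : Set Y) (p₁ q₁ p₂ q₂ : Y)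
      (hL₁ : L₁ ∈ B.lines) (hL₂ : L₂ ∈ B.lines) (hne : L₁ ≠ L₂)
      (hpq₁ : p₁ ≠ q₁) (hp₁ : p₁ ∈ L₁) (hq₁ : q₁ ∈ L₁)
      (hpq₂ : p₂ ≠ q₂) (hp₂ : p₂ ∈ L₂) (hq₂ : q₂ ∈ L₂)
      (cp₁ : PlanarCl B S p₁) (cq₁ : PlanarCl B S q₁)
      (cp₂ : PlanarCl B S p₂) (cq₂ : PlanarCl B S q₂)
      (hpL₁ : p ∈ L₁) (hpL₂ : p ∈ L₂) : PlanarCl B S p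

/-- A planarisation: an embedding such that every point of the target lies in
the planar closure of the image (i.e. the target is obtained by successively
adding intersection points of pairs of lines). -/
def IsPlanarisation {X : Type u} {Y : Type v} (A : LinSpace X) (B : LinSpace Y) (f : X → Y) : Prop :=
  IsEmbedding A B f ∧ ∀ y : Y, PlanarCl B (Set.range f) y

/-- An aplanar embedding: any two lines of `A` whose images intersect in `B`
already intersect in `A`. -/
def IsAplanar {X : Type u} {Y : Type v} (A : LinSpace X) (B : LinSpace Y) (f : X → Y) : Prop :=
  IsEmbedding A B f ∧
  ∀ L₁ ∈ A.lines, ∀ L₂ ∈ A.lines, ∀ M₁ ∈ B.lines, ∀ M₂ ∈ B.lines,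
    f '' L₁ ⊆ M₁ → f '' L₂ ⊆ M₂ → (M₁ ∩ M₂).Nonempty → (L₁ ∩ L₂).Nonempty

/-- The induced subspace on the set `S` of points of `B` is a projective plane:
any two induced lines (lines of `B` meeting `S` in at least two points) meet
inside `S`, and `S` contains four points no three collinear. -/
def IsProjPlaneOn {Y : Type v} (B : LinSpace Y) (S : Set Y) : Prop :=
  (∀ L₁ ∈ B.lines, ∀ L₂ ∈ B.lines,
      2 ≤ (L₁ ∩ S).encard → 2 ≤ (L₂ ∩ S).encard → (L₁ ∩ L₂ ∩ S).Nonempty) ∧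
  ∃ a b c d : Y, a ∈ S ∧ b ∈ S ∧ c ∈ S ∧ d ∈ S ∧
    a ≠ b ∧ a ≠ c ∧ a ≠ d ∧ b ≠ c ∧ b ≠ d ∧ c ≠ d ∧
    ∀ p q r : Y, p ∈ ({a, b, c, d} : Set Y) → q ∈ ({a, b, c, d} : Set Y) →
      r ∈ ({a, b, c, d} : Set Y) → p ≠ q → p ≠ r → q ≠ r → ¬ Collin B p q r

/-!
Homogeneity makes the automorphism group transitive on ordered pairs of distinct points, so all
lines have the same number of points, hence at least three as one of them does. Two lines through
a point `u` then carry a quadrangle `a, b ∈ L₁`, `c, d ∈ L₂` off `u`, and two disjoint lines would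
carry another one. Homogeneity moves the first quadrangle onto the second by an automorphism `g`,
and `g u` lies on both disjoint lines.
-/

namespace LinSpace

variable {X : Type u} (A : LinSpace X)

def GeneralPosition (S : Set X) : Prop :=
  ∀ p q r : X, p ∈ S → q ∈ S → r ∈ S → p ≠ q → p ≠ r → q ≠ r → ¬ Collin A p q r

def IsQuadrangle (a b c d : X) : Prop :=
  Injective ![a, b, c, d] ∧ A.GeneralPosition {a, b, c, d}

variable {A}

theorem line_eq_of_mem_of_mem {L M : Set X} (hL : L ∈ A.lines) (hM : M ∈ A.lines) {a b : X}
    (hab : a ≠ b) (haL : a ∈ L) (hbL : b ∈ L) (haM : a ∈ M) (hbM : b ∈ M) : L = M := by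
  by_contra h
  exact hab (A.inter_subsingleton L hL M hM h ⟨haL, haM⟩ ⟨hbL, hbM⟩)

theorem exists_ne_of_mem_lines {L : Set X} (hL : L ∈ A.lines) : ∃ a ∈ L, ∃ b ∈ L, a ≠ b := by
  obtain ⟨a, b, ha, hb, hab⟩ := Set.one_lt_encard_iff.mp
    ((by norm_num : (1 : ℕ∞) < 2).trans_le (A.two_le L hL))
  exact ⟨a, ha, b, hb, hab⟩

theorem exists_line_of_nonempty (hlines : A.lines.Nonempty) (x y : X) :
    ∃ L ∈ A.lines, x ∈ L ∧ y ∈ L := by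
  by_cases hxy : x = y
  · subst hxy
    obtain ⟨L, hL⟩ := hlines
    obtain ⟨w, hw, -⟩ := exists_ne_of_mem_lines hL
    by_cases hxw : x = w
    · exact ⟨L, hL, hxw ▸ hw, hxw ▸ hw⟩
    · obtain ⟨M, hM, hxM, -⟩ := A.exists_line x w hxw
      exact ⟨M, hM, hxM, hxM⟩
  · exact A.exists_line x y hxy

theorem collin_of_eq (hlines : A.lines.Nonempty) {x y z : X} (h : x = y ∨ x = z ∨ y = z) :
    Collin A x y z := by
  rcases h with rfl | rfl | rfl
  · obtain ⟨L, hL, hx, hz⟩ := exists_line_of_nonempty hlines x z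
    exact ⟨L, hL, hx, hx, hz⟩
  · obtain ⟨L, hL, hx, hy⟩ := exists_line_of_nonempty hlines x y
    exact ⟨L, hL, hx, hy, hx⟩
  · obtain ⟨L, hL, hx, hy⟩ := exists_line_of_nonempty hlines x y
    exact ⟨L, hL, hx, hy, hy⟩

theorem generalPosition_of_encard_inter_le_two {S : Set X}
    (h : ∀ M ∈ A.lines, (S ∩ M).encard ≤ 2) : A.GeneralPosition S := by
  rintro p q r hp hq hr hpq hpr hqr ⟨M, hM, hpM, hqM, hrM⟩
  have hsub : {p, q, r} ⊆ S ∩ M := by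
    simp only [Set.insert_subset_iff, Set.singleton_subset_iff]
    exact ⟨⟨hp, hpM⟩, ⟨hq, hqM⟩, ⟨hr, hrM⟩⟩
  have h3 : ({p, q, r} : Set X).encard = 3 := Set.encard_eq_three.mpr ⟨p, q, r, hpq, hpr, hqr, rfl⟩
  have := (Set.encard_le_encard hsub).trans (h M hM)
  rw [h3] at this
  exact absurd this (by norm_num)

theorem generalPosition_of_encard_le_two {S : Set X} (hS : S.encard ≤ 2) :
    A.GeneralPosition S :=
  generalPosition_of_encard_inter_le_two fun _ _ =>
    (Set.encard_le_encard Set.inter_subset_left).trans hS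

theorem generalPosition_union_of_subset_diff {L₁ L₂ S₁ S₂ : Set X} (hL₁ : L₁ ∈ A.lines)
    (hL₂ : L₂ ∈ A.lines) (hS₁ : S₁ ⊆ L₁ \ L₂) (hS₂ : S₂ ⊆ L₂ \ L₁) (h₁ : S₁.encard ≤ 2)
    (h₂ : S₂.encard ≤ 2) : A.GeneralPosition (S₁ ∪ S₂) := by
  refine generalPosition_of_encard_inter_le_two fun M hM => ?_
  have hle_one : ∀ {S L : Set X}, L ∈ A.lines → S ⊆ L → M ≠ L → (S ∩ M).encard ≤ 1 :=
    fun hL hSL hML => Set.encard_le_one_iff_subsingleton.mpr fun _ hx _ hy =>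
      A.inter_subsingleton M hM _ hL hML ⟨hx.2, hSL hx.1⟩ ⟨hy.2, hSL hy.1⟩
  have hempty : ∀ {S L K : Set X}, S ⊆ L \ K → (S ∩ K).encard = 0 := fun hSL =>
    Set.encard_eq_zero.mpr (Set.eq_empty_of_forall_notMem fun _ hx => (hSL hx.1).2 hx.2)
  rw [Set.union_inter_distrib_right]
  refine (Set.encard_union_le _ _).trans ?_
  by_cases hM₁ : M = L₁
  · subst hM₁
    rw [hempty hS₂, add_zero]
    exact (Set.encard_le_encard Set.inter_subset_left).trans h₁
  by_cases hM₂ : M = L₂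
  · subst hM₂
    rw [hempty hS₁, zero_add]
    exact (Set.encard_le_encard Set.inter_subset_left).trans h₂
  calc (S₁ ∩ M).encard + (S₂ ∩ M).encard ≤ 1 + 1 :=
        add_le_add (hle_one hL₁ (hS₁.trans Set.sdiff_subset) hM₁)
          (hle_one hL₂ (hS₂.trans Set.sdiff_subset) hM₂)
    _ = 2 := by norm_num

theorem exists_ne_mem_diff {L₁ L₂ : Set X} (hL₁ : L₁ ∈ A.lines) (hL₂ : L₂ ∈ A.lines)
    (hne : L₁ ≠ L₂) (h3 : 3 ≤ L₁.encard) : ∃ a ∈ L₁ \ L₂, ∃ b ∈ L₁ \ L₂, a ≠ b := by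
  have hinter : (L₁ ∩ L₂).encard ≤ 1 :=
    Set.encard_le_one_iff_subsingleton.mpr (A.inter_subsingleton L₁ hL₁ L₂ hL₂ hne)
  have hdiff : 1 < (L₁ \ L₂).encard := by
    by_contra! hle
    have := (Set.encard_sdiff_add_encard_inter L₁ L₂).symm.le.trans (add_le_add hle hinter)
    exact absurd (h3.trans this) (by norm_num)
  obtain ⟨a, b, ha, hb, hab⟩ := Set.one_lt_encard_iff.mp hdiff
  exact ⟨a, ha, b, hb, hab⟩

theorem exists_isQuadrangle {L₁ L₂ : Set X} (hL₁ : L₁ ∈ A.lines) (hL₂ : L₂ ∈ A.lines)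
    (hne : L₁ ≠ L₂) (h3₁ : 3 ≤ L₁.encard) (h3₂ : 3 ≤ L₂.encard) :
    ∃ a b c d, A.IsQuadrangle a b c d ∧ a ∈ L₁ ∧ b ∈ L₁ ∧ c ∈ L₂ ∧ d ∈ L₂ := by
  obtain ⟨a, ha, b, hb, hab⟩ := exists_ne_mem_diff hL₁ hL₂ hne h3₁
  obtain ⟨c, hc, d, hd, hcd⟩ := exists_ne_mem_diff hL₂ hL₁ hne.symm h3₂
  refine ⟨a, b, c, d, ⟨?_, ?_⟩, ha.1, hb.1, hc.1, hd.1⟩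
  · have hac : a ≠ c := ne_of_mem_of_not_mem hc.1 ha.2 |>.symm
    have had : a ≠ d := ne_of_mem_of_not_mem hd.1 ha.2 |>.symm
    have hbc : b ≠ c := ne_of_mem_of_not_mem hc.1 hb.2 |>.symm
    have hbd : b ≠ d := ne_of_mem_of_not_mem hd.1 hb.2 |>.symm
    intro i j hij
    fin_cases i <;> fin_cases j <;> simp_all [eq_comm]
  · have := generalPosition_union_of_subset_diff hL₁ hL₂
      (Set.insert_subset ha (Set.singleton_subset_iff.mpr hb))
      (Set.insert_subset hc (Set.singleton_subset_iff.mpr hd))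
      (Set.encard_pair hab).le (Set.encard_pair hcd).le
    rwa [Set.insert_union, Set.singleton_union] at this

theorem IsQuadrangle.fourIndep {a b c d : X} (h : A.IsQuadrangle a b c d) : FourIndep A :=
  ⟨a, b, c, d, h.1.ne (by decide : (0 : Fin 4) ≠ 1), h.1.ne (by decide : (0 : Fin 4) ≠ 2),
    h.1.ne (by decide : (0 : Fin 4) ≠ 3), h.1.ne (by decide : (1 : Fin 4) ≠ 2),
    h.1.ne (by decide : (1 : Fin 4) ≠ 3), h.1.ne (by decide : (2 : Fin 4) ≠ 3), h.2⟩

end LinSpace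

section Automorphisms

open LinSpace

variable {X : Type u} {A : LinSpace X}

theorem IsAuto.mapsTo_line {g : X → X} (hg : IsAuto A g) {L M : Set X} (hL : L ∈ A.lines)
    (hM : M ∈ A.lines) {a b : X} (hab : a ≠ b) (ha : a ∈ L) (hb : b ∈ L) (hga : g a ∈ M)
    (hgb : g b ∈ M) : MapsTo g L M := by
  intro z hz
  obtain ⟨N, hN, hgaN, hgbN, hgzN⟩ := (hg.2 a b z).1 ⟨L, hL, ha, hb, hz⟩
  rwa [line_eq_of_mem_of_mem hM hN (hg.1.1.ne hab) hga hgb hgaN hgbN]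

theorem Homogeneous.exists_isAuto_comp_eq (hhom : Homogeneous A) (hlines : A.lines.Nonempty)
    {ι : Type*} [Finite ι] {v w : ι → X} (hv : Injective v) (hw : Injective w)
    (hvA : A.GeneralPosition (range v)) (hwA : A.GeneralPosition (range w)) :
    ∃ g, IsAuto A g ∧ g ∘ v = w := by
  have hinj : InjOn (extend v w id) (range v) := by
    rintro _ ⟨i, rfl⟩ _ ⟨j, rfl⟩ h
    exact congrArg v (hw (by simpa only [hv.extend_apply] using h))
  have hcollin : ∀ x ∈ range v, ∀ y ∈ range v, ∀ z ∈ range v,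
      (Collin A x y z ↔ Collin A (extend v w id x) (extend v w id y) (extend v w id z)) := by
    rintro _ ⟨i, rfl⟩ _ ⟨j, rfl⟩ _ ⟨k, rfl⟩
    simp only [hv.extend_apply]
    by_cases hdeg : i = j ∨ i = k ∨ j = k
    · exact iff_of_true (collin_of_eq hlines (by rcases hdeg with rfl | rfl | rfl <;> simp))
        (collin_of_eq hlines (by rcases hdeg with rfl | rfl | rfl <;> simp))
    · push Not at hdeg
      obtain ⟨hij, hik, hjk⟩ := hdeg
      exact iff_of_false
        (hvA _ _ _ ⟨i, rfl⟩ ⟨j, rfl⟩ ⟨k, rfl⟩ (hv.ne hij) (hv.ne hik) (hv.ne hjk))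
        (hwA _ _ _ ⟨i, rfl⟩ ⟨j, rfl⟩ ⟨k, rfl⟩ (hw.ne hij) (hw.ne hik) (hw.ne hjk))
  obtain ⟨g, hg, hgv⟩ := hhom (range v) (finite_range v) (extend v w id) hinj hcollin
  exact ⟨g, hg, funext fun i => (hgv (v i) ⟨i, rfl⟩).trans (hv.extend_apply w id i)⟩

theorem Homogeneous.exists_isAuto_pair (hhom : Homogeneous A) (hlines : A.lines.Nonempty)
    {a b c d : X} (hab : a ≠ b) (hcd : c ≠ d) : ∃ g, IsAuto A g ∧ g a = c ∧ g b = d := by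
  have hpair : ∀ {x y : X}, A.GeneralPosition (range ![x, y]) := fun {x y} => by
    rw [Matrix.range_cons_cons_empty]
    exact generalPosition_of_encard_le_two
      ((Set.encard_insert_le _ _).trans_eq (by rw [Set.encard_singleton, one_add_one_eq_two]))
  obtain ⟨g, hg, hgv⟩ := hhom.exists_isAuto_comp_eq hlines (injective_pair_iff_ne.mpr hab)
    (injective_pair_iff_ne.mpr hcd) hpair hpair
  exact ⟨g, hg, congrFun hgv 0, congrFun hgv 1⟩

theorem Homogeneous.exists_isAuto_quadrangle (hhom : Homogeneous A) (hlines : A.lines.Nonempty)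
    {a b c d p q r s : X} (habcd : A.IsQuadrangle a b c d) (hpqrs : A.IsQuadrangle p q r s) :
    ∃ g, IsAuto A g ∧ g a = p ∧ g b = q ∧ g c = r ∧ g d = s := by
  have hrange : ∀ {x y z t : X}, range ![x, y, z, t] = {x, y, z, t} := by
    intro x y z t
    rw [Matrix.range_cons, Matrix.range_cons, Matrix.range_cons, Matrix.range_cons_empty]
    simp only [Set.singleton_union]
  obtain ⟨g, hg, hgv⟩ := hhom.exists_isAuto_comp_eq hlines habcd.1 hpqrs.1
    (hrange ▸ habcd.2) (hrange ▸ hpqrs.2)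
  exact ⟨g, hg, congrFun hgv 0, congrFun hgv 1, congrFun hgv 2, congrFun hgv 3⟩

theorem Homogeneous.encard_le_encard_of_mem_lines (hhom : Homogeneous A) {L M : Set X}
    (hL : L ∈ A.lines) (hM : M ∈ A.lines) : L.encard ≤ M.encard := by
  obtain ⟨a, ha, b, hb, hab⟩ := exists_ne_of_mem_lines hL
  obtain ⟨c, hc, d, hd, hcd⟩ := exists_ne_of_mem_lines hM
  obtain ⟨g, hg, rfl, rfl⟩ := hhom.exists_isAuto_pair ⟨L, hL⟩ hab hcd
  calc L.encard = (g '' L).encard := (hg.1.1.encard_image L).symm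
    _ ≤ M.encard := Set.encard_le_encard (hg.mapsTo_line hL hM hab ha hb hc hd).image_subset

theorem Homogeneous.three_le_encard (hhom : Homogeneous A) {L₀ L : Set X} (hL₀ : L₀ ∈ A.lines)
    (hL₀_ne : L₀.encard ≠ 2) (hL : L ∈ A.lines) : 3 ≤ L.encard :=
  (Order.add_one_le_of_lt ((A.two_le L₀ hL₀).lt_of_ne' hL₀_ne)).trans
    (hhom.encard_le_encard_of_mem_lines hL₀ hL)

theorem Homogeneous.inter_nonempty (hhom : Homogeneous A) (h3 : ∀ L ∈ A.lines, 3 ≤ L.encard)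
    {L₁ L₂ : Set X} (hL₁ : L₁ ∈ A.lines) (hL₂ : L₂ ∈ A.lines) (hL₁₂ : L₁ ≠ L₂)
    (hmeet : (L₁ ∩ L₂).Nonempty) {M₁ M₂ : Set X} (hM₁ : M₁ ∈ A.lines) (hM₂ : M₂ ∈ A.lines) :
    (M₁ ∩ M₂).Nonempty := by
  by_contra hdisj
  have hM₁₂ : M₁ ≠ M₂ := by
    rintro rfl
    obtain ⟨x, hx, -⟩ := exists_ne_of_mem_lines hM₁
    exact hdisj ⟨x, hx, hx⟩
  obtain ⟨u, huL₁, huL₂⟩ := hmeet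
  obtain ⟨a, b, c, d, habcd, ha, hb, hc, hd⟩ :=
    exists_isQuadrangle hL₁ hL₂ hL₁₂ (h3 L₁ hL₁) (h3 L₂ hL₂)
  obtain ⟨p, q, r, s, hpqrs, hp, hq, hr, hs⟩ :=
    exists_isQuadrangle hM₁ hM₂ hM₁₂ (h3 M₁ hM₁) (h3 M₂ hM₂)
  obtain ⟨g, hg, rfl, rfl, rfl, rfl⟩ := hhom.exists_isAuto_quadrangle ⟨L₁, hL₁⟩ habcd hpqrs
  have hab : a ≠ b := habcd.1.ne (by decide : (0 : Fin 4) ≠ 1)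
  have hcd : c ≠ d := habcd.1.ne (by decide : (2 : Fin 4) ≠ 3)
  exact hdisj ⟨g u, hg.mapsTo_line hL₁ hM₁ hab ha hb hp hq huL₁,
    hg.mapsTo_line hL₂ hM₂ hcd hc hd hr hs huL₂⟩

end Automorphisms

/-- A homogeneous nontrivial linear space that is not a single line is a
projective plane. -/
theorem stmt3 {X : Type u} (A : LinSpace X) (hhom : Homogeneous A)
    (hnontriv : ¬ ∀ L ∈ A.lines, L.encard = 2)
    (hnotline : ¬ ∀ x y z : X, Collin A x y z) :
    IsProjPlane A := by
  push Not at hnontriv hnotline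
  obtain ⟨L₀, hL₀, hL₀_ne⟩ := hnontriv
  obtain ⟨u, v, w, huvw⟩ := hnotline
  have hlines : A.lines.Nonempty := ⟨L₀, hL₀⟩
  have h3 : ∀ L ∈ A.lines, 3 ≤ L.encard := fun _ => hhom.three_le_encard hL₀ hL₀_ne
  obtain ⟨L₁, hL₁, huL₁, hvL₁⟩ := LinSpace.exists_line_of_nonempty hlines u v
  obtain ⟨L₂, hL₂, huL₂, hwL₂⟩ := LinSpace.exists_line_of_nonempty hlines u w
  have hL₁₂ : L₁ ≠ L₂ := by
    rintro rfl
    exact huvw ⟨L₁, hL₁, huL₁, hvL₁, hwL₂⟩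
  obtain ⟨a, b, c, d, habcd, -⟩ := LinSpace.exists_isQuadrangle hL₁ hL₂ hL₁₂ (h3 L₁ hL₁) (h3 L₂ hL₂)
  exact ⟨fun M₁ hM₁ M₂ hM₂ => hhom.inter_nonempty h3 hL₁ hL₂ hL₁₂ ⟨u, huL₁, huL₂⟩ hM₁ hM₂,
    habcd.fourIndep⟩
end

section
/- The Fano plane (the unique projective plane of order 2, with 7 points and 7 lines of 3 points each) is homogeneous: every isomorphism between subspaces extends to an automorphism. -/
open Set Function

universe u v w

/-!
A partial isomorphism `f` of the Fano plane extends one point at a time. If its domain `S`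
contains two points `s, t` whose line has its third point `x` outside `S`, send `x` to the third
point of the line through `f s, f t`: for `u ≠ v` in `S`, the point `x` lies on `uv` exactly when
`{u, v} = {s, t}` or `s, t, u, v` form a quadrangle (opposite sides of a quadrangle meet, and
with three points per line they can only meet in `x`), and `f` preserves both conditions.
Otherwise `S` is closed under third points, and so is `f '' S`; then no line through two
points of `S` or of `f '' S` leaves it, and any point outside `S` may be sent to any point
outside `f '' S`. After finitely many steps the domain is the whole plane, and an injective
partial isomorphism of a finite plane onto itself is an automorphism.
-/

variable {X : Type u} {A : LinSpace X}

theorem exists_eq_triple_of_encard_eq_three {L : Set X} (hL : L.encard = 3) {s t : X}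
    (hs : s ∈ L) (ht : t ∈ L) (hst : s ≠ t) : ∃ z, z ≠ s ∧ z ≠ t ∧ L = {s, t, z} := by
  have hpair : ({s, t} : Set X) ⊆ L := insert_subset hs (singleton_subset_iff.mpr ht)
  have hdiff : (L \ {s, t}).encard = 1 := by
    have h := encard_sdiff_add_encard_of_subset hpair
    rw [encard_pair hst, hL] at h
    exact ENat.add_left_injective_of_ne_top (by simp) (h.trans (by norm_num : (3 : ℕ∞) = 1 + 2))
  obtain ⟨z, hz⟩ := encard_eq_one.mp hdiff
  have hzL : z ∈ L \ {s, t} := hz ▸ rfl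
  simp only [mem_sdiff, mem_insert_iff, mem_singleton_iff, not_or] at hzL
  refine ⟨z, hzL.2.1, hzL.2.2, ?_⟩
  rw [← union_sdiff_cancel hpair, hz]
  ext
  simp only [mem_union, mem_insert_iff, mem_singleton_iff]
  tauto

namespace LinSpace

theorem eq_of_mem_of_mem {L M : Set X} (hL : L ∈ A.lines) (hM : M ∈ A.lines) {x y : X}
    (hxy : x ≠ y) (hxL : x ∈ L) (hyL : y ∈ L) (hxM : x ∈ M) (hyM : y ∈ M) : L = M := by
  by_contra h
  exact hxy (A.inter_subsingleton L hL M hM h ⟨hxL, hxM⟩ ⟨hyL, hyM⟩)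

theorem mem_of_collin {L : Set X} (hL : L ∈ A.lines) {x y z : X} (hxy : x ≠ y)
    (hx : x ∈ L) (hy : y ∈ L) (h : Collin A x y z) : z ∈ L := by
  obtain ⟨M, hM, hxM, hyM, hzM⟩ := h
  rwa [eq_of_mem_of_mem hL hM hxy hx hy hxM hyM]

variable (A) in
theorem exists_line_through [Nontrivial X] (x y : X) : ∃ L ∈ A.lines, x ∈ L ∧ y ∈ L := by
  rcases eq_or_ne x y with rfl | hxy
  · obtain ⟨w, hw⟩ := exists_ne x
    obtain ⟨L, hL, -, hx⟩ := A.exists_line w x hw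
    exact ⟨L, hL, hx, hx⟩
  · exact A.exists_line x y hxy

end LinSpace

namespace Collin

theorem swap {x y z : X} (h : Collin A x y z) : Collin A y x z := by
  obtain ⟨L, hL, hx, hy, hz⟩ := h
  exact ⟨L, hL, hy, hx, hz⟩

theorem rotate {x y z : X} (h : Collin A x y z) : Collin A y z x := by
  obtain ⟨L, hL, hx, hy, hz⟩ := h
  exact ⟨L, hL, hy, hz, hx⟩

end Collin

theorem collin_of_eq_or_eq [Nontrivial X] {x y z : X} (h : x = y ∨ x = z ∨ y = z) :
    Collin A x y z := by
  rcases h with rfl | rfl | rfl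
  · obtain ⟨L, hL, hx, hz⟩ := A.exists_line_through x z
    exact ⟨L, hL, hx, hx, hz⟩
  · obtain ⟨L, hL, hx, hy⟩ := A.exists_line_through x y
    exact ⟨L, hL, hx, hy, hx⟩
  · obtain ⟨L, hL, hx, hy⟩ := A.exists_line_through x y
    exact ⟨L, hL, hx, hy, hy⟩

def InGeneralPosition (A : LinSpace X) (a b c d : X) : Prop :=
  ¬ Collin A a b c ∧ ¬ Collin A a b d ∧ ¬ Collin A a c d ∧ ¬ Collin A b c d

/-- With three points per line, the third point `x` of `st` is the only point where `st` can
meet the opposite side `uv` of a quadrangle `s t u v`. -/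
theorem collin_iff_of_eq_triple
    (hmeet : ∀ L₁ ∈ A.lines, ∀ L₂ ∈ A.lines, (L₁ ∩ L₂).Nonempty)
    {L : Set X} (hL : L ∈ A.lines) {s t x : X} (hLst : L = {s, t, x})
    (hst : s ≠ t) (hsx : s ≠ x) (htx : t ≠ x) {u v : X} (huv : u ≠ v) (hux : u ≠ x) (hvx : v ≠ x) :
    Collin A x u v ↔ (u = s ∧ v = t ∨ u = t ∧ v = s) ∨ InGeneralPosition A s t u v := by
  have hsL : s ∈ L := by simp [hLst]
  have htL : t ∈ L := by simp [hLst]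
  constructor
  · rintro ⟨M, hM, hxM, huM, hvM⟩
    by_cases hML : M = L
    · subst hML
      simp only [hLst, mem_insert_iff, mem_singleton_iff] at huM hvM
      left
      rcases huM with rfl | rfl | rfl <;> rcases hvM with rfl | rfl | rfl <;> simp_all
    · have hxL : x ∈ L := by simp [hLst]
      have only_x : ∀ {w}, w ∈ M → w ∈ L → w = x := fun hwM hwL =>
        A.inter_subsingleton M hM L hL hML ⟨hwM, hwL⟩ ⟨hxM, hxL⟩
      right
      refine ⟨fun h => hux (only_x huM (A.mem_of_collin hL hst hsL htL h)),
        fun h => hvx (only_x hvM (A.mem_of_collin hL hst hsL htL h)),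
        fun h => hsx (only_x (A.mem_of_collin hM huv huM hvM h.rotate) hsL),
        fun h => htx (only_x (A.mem_of_collin hM huv huM hvM h.rotate) htL)⟩
  · rintro ((⟨rfl, rfl⟩ | ⟨rfl, rfl⟩) | ⟨-, -, hsuv, htuv⟩)
    · exact ⟨L, hL, by simp [hLst], hsL, htL⟩
    · exact ⟨L, hL, by simp [hLst], htL, hsL⟩
    · obtain ⟨M, hM, huM, hvM⟩ := A.exists_line u v huv
      obtain ⟨z, hzL, hzM⟩ := hmeet L hL M hM
      simp only [hLst, mem_insert_iff, mem_singleton_iff] at hzL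
      rcases hzL with rfl | rfl | rfl
      · exact absurd ⟨M, hM, hzM, huM, hvM⟩ hsuv
      · exact absurd ⟨M, hM, hzM, huM, hvM⟩ htuv
      · exact ⟨M, hM, hzM, huM, hvM⟩

theorem Set.InjOn.image_ne_univ [Finite X] {S : Set X} {f : X → X} (hf : InjOn f S)
    (hS : S ≠ univ) : f '' S ≠ univ := by
  intro h
  refine hS (eq_of_subset_of_ncard_le (subset_univ S) ?_)
  rw [← h, hf.ncard_image]

def IsPartialIso (A : LinSpace X) (S : Set X) (f : X → X) : Prop :=
  InjOn f S ∧ ∀ x ∈ S, ∀ y ∈ S, ∀ z ∈ S, (Collin A x y z ↔ Collin A (f x) (f y) (f z))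

namespace IsPartialIso

variable {S : Set X} {f : X → X}

theorem inGeneralPosition_iff (hf : IsPartialIso A S f) {a b c d : X}
    (ha : a ∈ S) (hb : b ∈ S) (hc : c ∈ S) (hd : d ∈ S) :
    InGeneralPosition A (f a) (f b) (f c) (f d) ↔ InGeneralPosition A a b c d := by
  simp only [InGeneralPosition, hf.2 _ ha _ hb _ hc, hf.2 _ ha _ hb _ hd, hf.2 _ ha _ hc _ hd,
    hf.2 _ hb _ hc _ hd]

theorem insert_update [Nontrivial X] [DecidableEq X] (hf : IsPartialIso A S f) {x y : X}
    (hx : x ∉ S) (hy : y ∉ f '' S)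
    (hxy : ∀ u ∈ S, ∀ v ∈ S, u ≠ v → (Collin A x u v ↔ Collin A y (f u) (f v))) :
    IsPartialIso A (insert x S) (update f x y) := by
  set g := update f x y
  have hgx : g x = y := update_self x y f
  have hgS : ∀ u ∈ S, g u = f u := fun u hu => update_of_ne (ne_of_mem_of_not_mem hu hx) y f
  refine ⟨?_, ?_⟩
  · rintro u (rfl | hu) v (rfl | hv) huv
    · rfl
    · rw [hgx, hgS v hv] at huv
      exact absurd ⟨v, hv, huv.symm⟩ hy
    · rw [hgx, hgS u hu] at huv
      exact absurd ⟨u, hu, huv⟩ hy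
    · rw [hgS u hu, hgS v hv] at huv
      exact hf.1 hu hv huv
  · intro u hu v hv w hw
    by_cases hdeg : u = v ∨ u = w ∨ v = w
    · refine iff_of_true (collin_of_eq_or_eq hdeg) (collin_of_eq_or_eq ?_)
      rcases hdeg with h | h | h <;> simp [h]
    push Not at hdeg
    obtain ⟨huv, huw, hvw⟩ := hdeg
    rcases hu with rfl | hu <;> rcases hv with rfl | hv <;> rcases hw with rfl | hw
    · exact absurd rfl huv
    · exact absurd rfl huv
    · exact absurd rfl huw
    · rw [hgx, hgS v hv, hgS w hw]
      exact hxy v hv w hw hvw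
    · exact absurd rfl hvw
    · rw [hgx, hgS u hu, hgS w hw]
      exact ⟨fun h => ((hxy u hu w hw huw).mp h.swap).swap,
        fun h => ((hxy u hu w hw huw).mpr h.swap).swap⟩
    · rw [hgx, hgS u hu, hgS v hv]
      exact ⟨fun h => ((hxy u hu v hv huv).mp h.rotate.rotate).rotate,
        fun h => ((hxy u hu v hv huv).mpr h.rotate.rotate).rotate⟩
    · rw [hgS u hu, hgS v hv, hgS w hw]
      exact hf.2 u hu v hv w hw


theorem exists_insert_of_collin [Nontrivial X]
    (hmeet : ∀ L₁ ∈ A.lines, ∀ L₂ ∈ A.lines, (L₁ ∩ L₂).Nonempty)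
    (h3 : ∀ L ∈ A.lines, L.encard = 3) (hf : IsPartialIso A S f) {s t x : X}
    (hs : s ∈ S) (ht : t ∈ S) (hst : s ≠ t) (hx : x ∉ S) (hstx : Collin A s t x) :
    ∃ f' : X → X, IsPartialIso A (insert x S) f' ∧ EqOn f' f S := by
  classical
  obtain ⟨L, hL, hsL, htL, hxL⟩ := hstx
  have hsx : s ≠ x := ne_of_mem_of_not_mem hs hx
  have htx : t ≠ x := ne_of_mem_of_not_mem ht hx
  have hLst : L = {s, t, x} := by
    obtain ⟨z, -, -, hLz⟩ := exists_eq_triple_of_encard_eq_three (h3 L hL) hsL htL hst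
    have hxz : x = z := by simpa [hLz, hsx.symm, htx.symm] using hxL
    rw [hLz, hxz]
  have hfst : f s ≠ f t := hf.1.ne hs ht hst
  obtain ⟨L', hL', hsL', htL'⟩ := A.exists_line (f s) (f t) hfst
  obtain ⟨y, hys, hyt, hL'st⟩ := exists_eq_triple_of_encard_eq_three (h3 L' hL') hsL' htL' hfst
  have hy : y ∉ f '' S := by
    rintro ⟨w, hw, rfl⟩
    have hwL : w ∈ L := A.mem_of_collin hL hst hsL htL
      ((hf.2 s hs t ht w hw).mpr ⟨L', hL', hsL', htL', by simp [hL'st]⟩)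
    simp only [hLst, mem_insert_iff, mem_singleton_iff] at hwL
    rcases hwL with rfl | rfl | rfl
    · exact hys rfl
    · exact hyt rfl
    · exact hx hw
  refine ⟨update f x y, hf.insert_update hx hy fun u hu v hv huv => ?_,
    fun w hw => update_of_ne (ne_of_mem_of_not_mem hw hx) y f⟩
  rw [collin_iff_of_eq_triple hmeet hL hLst hst hsx htx huv (ne_of_mem_of_not_mem hu hx)
      (ne_of_mem_of_not_mem hv hx),
    collin_iff_of_eq_triple hmeet hL' hL'st hfst hys.symm hyt.symm (hf.1.ne hu hv huv)
      (fun h => hy ⟨u, hu, h⟩) (fun h => hy ⟨v, hv, h⟩),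
    hf.inGeneralPosition_iff hs ht hu hv, hf.1.eq_iff hu hs, hf.1.eq_iff hv ht,
    hf.1.eq_iff hu ht, hf.1.eq_iff hv hs]

theorem exists_insert_of_closed [Finite X] [Nontrivial X] (h3 : ∀ L ∈ A.lines, L.encard = 3)
    (hf : IsPartialIso A S f) (hS : S ≠ univ)
    (hclosed : ∀ s ∈ S, ∀ t ∈ S, ∀ x, s ≠ t → Collin A s t x → x ∈ S) :
    ∃ x ∉ S, ∃ f' : X → X, IsPartialIso A (insert x S) f' ∧ EqOn f' f S := by
  classical
  obtain ⟨x, hx⟩ := (ne_univ_iff_exists_notMem S).mp hS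
  obtain ⟨y, hy⟩ := (ne_univ_iff_exists_notMem _).mp (hf.1.image_ne_univ hS)
  refine ⟨x, hx, update f x y,
    hf.insert_update hx hy fun u hu v hv huv => iff_of_false ?_ ?_,
    fun w hw => update_of_ne (ne_of_mem_of_not_mem hw hx) y f⟩
  · exact fun h => hx (hclosed u hu v hv x huv h.rotate)
  -- The third point of `uv` lies in `S`, so the third point of `f u f v` lies in `f '' S`.
  · rintro ⟨M, hM, hyM, huM, hvM⟩
    have hfuv : f u ≠ f v := hf.1.ne hu hv huv
    obtain ⟨N, hN, huN, hvN⟩ := A.exists_line u v huv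
    obtain ⟨z, hzu, hzv, hNuv⟩ := exists_eq_triple_of_encard_eq_three (h3 N hN) huN hvN huv
    have huvz : Collin A u v z := ⟨N, hN, huN, hvN, by simp [hNuv]⟩
    have hzS : z ∈ S := hclosed u hu v hv z huv huvz
    have hfzM : f z ∈ M := A.mem_of_collin hM hfuv huM hvM ((hf.2 u hu v hv z hzS).mp huvz)
    obtain ⟨w, -, -, hMw⟩ := exists_eq_triple_of_encard_eq_three (h3 M hM) huM hvM hfuv
    simp only [hMw, mem_insert_iff, mem_singleton_iff] at hyM hfzM
    rcases hyM with rfl | rfl | rfl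
    · exact hy ⟨u, hu, rfl⟩
    · exact hy ⟨v, hv, rfl⟩
    rcases hfzM with h | h | rfl
    · exact hzu (hf.1 hzS hu h)
    · exact hzv (hf.1 hzS hv h)
    · exact hy ⟨z, hzS, rfl⟩

theorem exists_insert [Finite X] [Nontrivial X]
    (hmeet : ∀ L₁ ∈ A.lines, ∀ L₂ ∈ A.lines, (L₁ ∩ L₂).Nonempty)
    (h3 : ∀ L ∈ A.lines, L.encard = 3) (hf : IsPartialIso A S f) (hS : S ≠ univ) :
    ∃ x ∉ S, ∃ f' : X → X, IsPartialIso A (insert x S) f' ∧ EqOn f' f S := by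
  by_cases hclosed : ∀ s ∈ S, ∀ t ∈ S, ∀ x, s ≠ t → Collin A s t x → x ∈ S
  · exact hf.exists_insert_of_closed h3 hS hclosed
  · push Not at hclosed
    obtain ⟨s, hs, t, ht, x, hst, hstx, hx⟩ := hclosed
    exact ⟨x, hx, hf.exists_insert_of_collin hmeet h3 hs ht hst hx hstx⟩

theorem exists_extend_univ [Finite X]
    (hext : ∀ (S : Set X) (f : X → X), IsPartialIso A S f → S ≠ univ →
      ∃ x ∉ S, ∃ f' : X → X, IsPartialIso A (insert x S) f' ∧ EqOn f' f S)
    (hf : IsPartialIso A S f) : ∃ g : X → X, IsPartialIso A univ g ∧ EqOn g f S := by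
  induction hn : Sᶜ.ncard generalizing S f with
  | zero =>
    obtain rfl : S = univ := compl_empty_iff.mp ((ncard_eq_zero (toFinite _)).mp hn)
    exact ⟨f, hf, eqOn_refl f univ⟩
  | succ n ih =>
    have hS : S ≠ univ := by
      rintro rfl
      simp at hn
    obtain ⟨x, hx, f', hf', hf'f⟩ := hext S f hf hS
    have hn' : (insert x S)ᶜ.ncard = n := by
      rw [insert_eq, compl_union, inter_comm, ← sdiff_eq,
        ncard_sdiff_singleton_of_mem (mem_compl hx), hn, Nat.add_sub_cancel]
    obtain ⟨g, hg, hgf'⟩ := ih hf' hn'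
    exact ⟨g, hg, fun w hw => (hgf' (mem_insert_of_mem x hw)).trans (hf'f hw)⟩

theorem isAuto [Finite X] (hf : IsPartialIso A univ f) : IsAuto A f :=
  ⟨Finite.injective_iff_bijective.mp (injOn_univ.mp hf.1),
    fun x y z => hf.2 x trivial y trivial z trivial⟩

end IsPartialIso

/-- The Fano plane (the unique projective plane of order 2, with 7 points and
lines of 3 points each) is homogeneous. -/
theorem stmt5 {X : Type u} (A : LinSpace X) (hA : IsFano A) :
    Homogeneous A := by
  obtain ⟨⟨hmeet, -⟩, h3, h7⟩ := hA
  have : Finite X := finite_univ_iff.mp (finite_of_encard_eq_coe h7)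
  have : Nontrivial X := nontrivial_univ_iff.mp
    (one_lt_encard_iff_nontrivial.mp (by rw [h7]; norm_num))
  intro S _ f hinj hcol
  obtain ⟨g, hg, hgf⟩ := IsPartialIso.exists_extend_univ
    (fun S f hf hS => hf.exists_insert hmeet h3 hS) ⟨hinj, hcol⟩
  exact ⟨g, hg.isAuto, hgf⟩
end

section
/- The projective plane of order 3 (over the field F_3, with 13 points and 13 lines of 4 points each) is homogeneous: every isomorphism between its finite subspaces extends to an automorphism. -/
open Set Function

universe u v w

namespace PG23
open Set Function

def clines : List (Finset (Fin 13)) :=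
  [{0,1,4,7},{0,2,5,8},{0,3,6,9},{1,2,6,10},{1,3,5,11},{2,3,4,12},
   {0,10,11,12},{1,8,9,12},{2,7,9,11},{3,7,8,10},{4,5,9,10},{4,6,8,11},{5,6,7,12}]

def R (i j k : Fin 13) : Prop := ∃ l ∈ clines, i ∈ l ∧ j ∈ l ∧ k ∈ l

instance : ∀ i j k, Decidable (R i j k) := by unfold R; infer_instance

set_option maxRecDepth 10000 in
theorem cover : ∀ i j : Fin 13, ∃ l ∈ clines, i ∈ l ∧ j ∈ l := by decide

set_option maxRecDepth 100000 in
theorem pattern_unique : ∀ i j : Fin 13,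
    (R i 0 1 ↔ R j 0 1) → (R i 0 2 ↔ R j 0 2) → (R i 0 3 ↔ R j 0 3) →
    (R i 1 2 ↔ R j 1 2) → (R i 1 3 ↔ R j 1 3) → (R i 2 3 ↔ R j 2 3) → i = j := by decide

variable {X : Type u} {A : LinSpace X}

theorem eq_line {L M : Set X} (hL : L ∈ A.lines) (hM : M ∈ A.lines) {x y : X} (hxy : x ≠ y)
    (h1 : x ∈ L) (h2 : y ∈ L) (h3 : x ∈ M) (h4 : y ∈ M) : L = M := by
  by_contra hne
  exact hxy (A.inter_subsingleton L hL M hM hne ⟨h1, h3⟩ ⟨h2, h4⟩)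

theorem meet_unique {L M : Set X} (hL : L ∈ A.lines) (hM : M ∈ A.lines) (hne : L ≠ M) {x y : X}
    (h1 : x ∈ L) (h2 : x ∈ M) (h3 : y ∈ L) (h4 : y ∈ M) : x = y :=
  A.inter_subsingleton L hL M hM hne ⟨h1, h2⟩ ⟨h3, h4⟩

theorem line_encard (hA : IsPG2_3 A) {L : Set X} (hL : L ∈ A.lines) : L.encard = 4 :=
  hA.2.1 L hL

theorem line_finite (hA : IsPG2_3 A) {L : Set X} (hL : L ∈ A.lines) : L.Finite := by
  have := line_encard hA hL
  exact Set.finite_of_encard_eq_coe (show L.encard = ((4:ℕ) : ℕ∞) by exact_mod_cast this)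

theorem encard4 {a b c d : X} (hab : a ≠ b) (hac : a ≠ c) (had : a ≠ d)
    (hbc : b ≠ c) (hbd : b ≠ d) (hcd : c ≠ d) : ({a, b, c, d} : Set X).encard = 4 := by
  have h1 : a ∉ ({b, c, d} : Set X) := by
    simp only [Set.mem_insert_iff, Set.mem_singleton_iff]; push_neg; exact ⟨hab, hac, had⟩
  have h2 : b ∉ ({c, d} : Set X) := by
    simp only [Set.mem_insert_iff, Set.mem_singleton_iff]; push_neg; exact ⟨hbc, hbd⟩
  have h3 : c ∉ ({d} : Set X) := by simp only [Set.mem_singleton_iff]; exact hcd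
  rw [Set.encard_insert_of_notMem h1, Set.encard_insert_of_notMem h2,
    Set.encard_insert_of_notMem h3, Set.encard_singleton]
  rfl

theorem line_four (hA : IsPG2_3 A) {L : Set X} (hL : L ∈ A.lines) {x y z : X}
    (hxy : x ≠ y) (hxz : x ≠ z) (hyz : y ≠ z) (hx : x ∈ L) (hy : y ∈ L) (hz : z ∈ L) :
    ∃ w, w ∉ ({x, y, z} : Set X) ∧ L = {x, y, z, w} := by
  have hsub : ({x, y, z} : Set X) ⊆ L := by
    intro t ht
    simp only [Set.mem_insert_iff, Set.mem_singleton_iff] at ht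
    rcases ht with rfl | rfl | rfl <;> assumption
  have h3 : ({x, y, z} : Set X).encard = 3 := by
    have h1 : x ∉ ({y, z} : Set X) := by
      simp only [Set.mem_insert_iff, Set.mem_singleton_iff]; push_neg; exact ⟨hxy, hxz⟩
    have h2 : y ∉ ({z} : Set X) := by simp only [Set.mem_singleton_iff]; exact hyz
    rw [Set.encard_insert_of_notMem h1, Set.encard_insert_of_notMem h2, Set.encard_singleton]
    rfl
  have hdiff : (L \ ({x, y, z} : Set X)).encard = 1 := by
    have := Set.encard_diff_add_encard_of_subset hsub
    rw [h3, line_encard hA hL] at this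
    -- this : (L \ {x,y,z}).encard + 3 = 4
    have h4 : (4 : ℕ∞) = 1 + 3 := by norm_num
    rw [h4] at this
    exact WithTop.add_right_cancel (ENat.ofNat_ne_top 3) this
  obtain ⟨w, hw⟩ := Set.encard_eq_one.mp hdiff
  have hwmem : w ∈ L \ ({x, y, z} : Set X) := by rw [hw]; rfl
  refine ⟨w, hwmem.2, ?_⟩
  have : L = ({x, y, z} : Set X) ∪ (L \ {x, y, z}) := by
    rw [Set.union_diff_cancel hsub]
  rw [this, hw]
  ext t
  simp only [Set.mem_union, Set.mem_insert_iff, Set.mem_singleton_iff]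
  tauto

theorem exists_off (hA : IsPG2_3 A) {L : Set X} (hL : L ∈ A.lines) : ∃ p, p ∉ L := by
  by_contra h
  push_neg at h
  have hsub : (Set.univ : Set X) ⊆ L := fun p _ => h p
  have := Set.encard_mono hsub
  rw [hA.2.2, line_encard hA hL] at this
  norm_num at this

theorem line_decomp (hA : IsPG2_3 A) {L : Set X} (hL : L ∈ A.lines) :
    ∃ u₁ u₂ u₃ u₄ : X, u₁ ≠ u₂ ∧ u₁ ≠ u₃ ∧ u₁ ≠ u₄ ∧ u₂ ≠ u₃ ∧ u₂ ≠ u₄ ∧ u₃ ≠ u₄ ∧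
      L = {u₁, u₂, u₃, u₄} := by
  have h4 := line_encard hA hL
  have hne : L.Nonempty := by
    rw [← Set.encard_ne_zero, h4]; norm_num
  obtain ⟨u₁, hu₁⟩ := hne
  have hd3 : (L \ {u₁}).encard = 3 := by
    have := Set.encard_diff_add_encard_of_subset (Set.singleton_subset_iff.mpr hu₁)
    rw [Set.encard_singleton, h4] at this
    have h4' : (4 : ℕ∞) = 3 + 1 := by norm_num
    rw [h4'] at this
    exact WithTop.add_right_cancel ENat.one_ne_top this
  obtain ⟨u₂, u₃, u₄, h23, h24, h34, heq⟩ := Set.encard_eq_three.mp hd3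
  have h2 : u₂ ∈ L \ {u₁} := by rw [heq]; simp
  have h3 : u₃ ∈ L \ {u₁} := by rw [heq]; simp
  have h4' : u₄ ∈ L \ {u₁} := by rw [heq]; simp
  refine ⟨u₁, u₂, u₃, u₄, fun h => h2.2 (by simp [← h]), fun h => h3.2 (by simp [← h]),
    fun h => h4'.2 (by simp [← h]), h23, h24, h34, ?_⟩
  have : L = {u₁} ∪ (L \ {u₁}) := by
    rw [Set.union_diff_cancel (Set.singleton_subset_iff.mpr hu₁)]
  rw [this, heq, Set.singleton_union]

def Quad (A : LinSpace X) (a b c d : X) : Prop :=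
  a ≠ b ∧ a ≠ c ∧ a ≠ d ∧ b ≠ c ∧ b ≠ d ∧ c ≠ d ∧
  ¬Collin A a b c ∧ ¬Collin A a b d ∧ ¬Collin A a c d ∧ ¬Collin A b c d

end PG23
namespace PG23
open Set Function
theorem labeling {X : Type u} {A : LinSpace X} (hA : IsPG2_3 A) {a b c d : X}
    (hq : Quad A a b c d) :
    ∃ e : Fin 13 → X, Function.Bijective e ∧
      (∀ i j k, R i j k ↔ Collin A (e i) (e j) (e k)) ∧
      e 0 = a ∧ e 1 = b ∧ e 2 = c ∧ e 3 = d ∧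
      (∃ L ∈ A.lines, a ∈ L ∧ b ∈ L ∧ e 4 ∈ L ∧ e 7 ∈ L) ∧
      (∃ L ∈ A.lines, c ∈ L ∧ d ∈ L ∧ e 4 ∈ L) ∧
      e 7 ≠ a ∧ e 7 ≠ b ∧ e 7 ≠ e 4 := by
  obtain ⟨ne_a_b, ne_a_c, ne_a_d, ne_b_c, ne_b_d, ne_c_d, nabc, nabd, nacd, nbcd⟩ := hq
  obtain ⟨Lab, hLab, h_a_Lab, h_b_Lab⟩ := A.exists_line a b ne_a_b
  obtain ⟨Lac, hLac, h_a_Lac, h_c_Lac⟩ := A.exists_line a c ne_a_c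
  obtain ⟨Lad, hLad, h_a_Lad, h_d_Lad⟩ := A.exists_line a d ne_a_d
  obtain ⟨Lbc, hLbc, h_b_Lbc, h_c_Lbc⟩ := A.exists_line b c ne_b_c
  obtain ⟨Lbd, hLbd, h_b_Lbd, h_d_Lbd⟩ := A.exists_line b d ne_b_d
  obtain ⟨Lcd, hLcd, h_c_Lcd, h_d_Lcd⟩ := A.exists_line c d ne_c_d
  have n_c_Lab : c ∉ Lab := fun h => nabc ⟨Lab, hLab, h_a_Lab, h_b_Lab, h⟩
  have n_d_Lab : d ∉ Lab := fun h => nabd ⟨Lab, hLab, h_a_Lab, h_b_Lab, h⟩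
  have n_b_Lac : b ∉ Lac := fun h => nabc ⟨Lac, hLac, h_a_Lac, h, h_c_Lac⟩
  have n_d_Lac : d ∉ Lac := fun h => nacd ⟨Lac, hLac, h_a_Lac, h_c_Lac, h⟩
  have n_b_Lad : b ∉ Lad := fun h => nabd ⟨Lad, hLad, h_a_Lad, h, h_d_Lad⟩
  have n_c_Lad : c ∉ Lad := fun h => nacd ⟨Lad, hLad, h_a_Lad, h, h_d_Lad⟩
  have n_a_Lbc : a ∉ Lbc := fun h => nabc ⟨Lbc, hLbc, h, h_b_Lbc, h_c_Lbc⟩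
  have n_d_Lbc : d ∉ Lbc := fun h => nbcd ⟨Lbc, hLbc, h_b_Lbc, h_c_Lbc, h⟩
  have n_a_Lbd : a ∉ Lbd := fun h => nabd ⟨Lbd, hLbd, h, h_b_Lbd, h_d_Lbd⟩
  have n_c_Lbd : c ∉ Lbd := fun h => nbcd ⟨Lbd, hLbd, h_b_Lbd, h, h_d_Lbd⟩
  have n_a_Lcd : a ∉ Lcd := fun h => nacd ⟨Lcd, hLcd, h, h_c_Lcd, h_d_Lcd⟩
  have n_b_Lcd : b ∉ Lcd := fun h => nbcd ⟨Lcd, hLcd, h, h_c_Lcd, h_d_Lcd⟩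
  have ne_Lab_Lac : Lab ≠ Lac := fun h => n_c_Lab (by rw [h]; exact h_c_Lac)
  have ne_Lab_Lad : Lab ≠ Lad := fun h => n_d_Lab (by rw [h]; exact h_d_Lad)
  have ne_Lab_Lbc : Lab ≠ Lbc := fun h => n_c_Lab (by rw [h]; exact h_c_Lbc)
  have ne_Lab_Lbd : Lab ≠ Lbd := fun h => n_d_Lab (by rw [h]; exact h_d_Lbd)
  have ne_Lab_Lcd : Lab ≠ Lcd := fun h => n_c_Lab (by rw [h]; exact h_c_Lcd)
  have ne_Lac_Lad : Lac ≠ Lad := fun h => n_d_Lac (by rw [h]; exact h_d_Lad)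
  have ne_Lac_Lbc : Lac ≠ Lbc := fun h => n_b_Lac (by rw [h]; exact h_b_Lbc)
  have ne_Lac_Lbd : Lac ≠ Lbd := fun h => n_b_Lac (by rw [h]; exact h_b_Lbd)
  have ne_Lac_Lcd : Lac ≠ Lcd := fun h => n_d_Lac (by rw [h]; exact h_d_Lcd)
  have ne_Lad_Lbc : Lad ≠ Lbc := fun h => n_b_Lad (by rw [h]; exact h_b_Lbc)
  have ne_Lad_Lbd : Lad ≠ Lbd := fun h => n_b_Lad (by rw [h]; exact h_b_Lbd)
  have ne_Lad_Lcd : Lad ≠ Lcd := fun h => n_c_Lad (by rw [h]; exact h_c_Lcd)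
  have ne_Lbc_Lbd : Lbc ≠ Lbd := fun h => n_d_Lbc (by rw [h]; exact h_d_Lbd)
  have ne_Lbc_Lcd : Lbc ≠ Lcd := fun h => n_d_Lbc (by rw [h]; exact h_d_Lcd)
  have ne_Lbd_Lcd : Lbd ≠ Lcd := fun h => n_c_Lbd (by rw [h]; exact h_c_Lcd)
  obtain ⟨d1, h_d1_Lab, h_d1_Lcd⟩ := hA.1.1 Lab hLab Lcd hLcd
  obtain ⟨d2, h_d2_Lac, h_d2_Lbd⟩ := hA.1.1 Lac hLac Lbd hLbd
  obtain ⟨d3, h_d3_Lad, h_d3_Lbc⟩ := hA.1.1 Lad hLad Lbc hLbc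
  have ne_d1_a : d1 ≠ a := fun h => n_a_Lcd (by rw [← h]; exact h_d1_Lcd)
  have ne_d1_b : d1 ≠ b := fun h => n_b_Lcd (by rw [← h]; exact h_d1_Lcd)
  have ne_d1_c : d1 ≠ c := fun h => n_c_Lab (by rw [← h]; exact h_d1_Lab)
  have ne_d1_d : d1 ≠ d := fun h => n_d_Lab (by rw [← h]; exact h_d1_Lab)
  have ne_d2_a : d2 ≠ a := fun h => n_a_Lbd (by rw [← h]; exact h_d2_Lbd)
  have ne_d2_b : d2 ≠ b := fun h => n_b_Lac (by rw [← h]; exact h_d2_Lac)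
  have ne_d2_c : d2 ≠ c := fun h => n_c_Lbd (by rw [← h]; exact h_d2_Lbd)
  have ne_d2_d : d2 ≠ d := fun h => n_d_Lac (by rw [← h]; exact h_d2_Lac)
  have ne_d3_a : d3 ≠ a := fun h => n_a_Lbc (by rw [← h]; exact h_d3_Lbc)
  have ne_d3_b : d3 ≠ b := fun h => n_b_Lad (by rw [← h]; exact h_d3_Lad)
  have ne_d3_c : d3 ≠ c := fun h => n_c_Lad (by rw [← h]; exact h_d3_Lad)
  have ne_d3_d : d3 ≠ d := fun h => n_d_Lbc (by rw [← h]; exact h_d3_Lbc)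
  have n_d1_Lac : d1 ∉ Lac := fun h => ne_d1_a (meet_unique hLab hLac ne_Lab_Lac h_d1_Lab h h_a_Lab h_a_Lac)
  have n_d1_Lad : d1 ∉ Lad := fun h => ne_d1_a (meet_unique hLab hLad ne_Lab_Lad h_d1_Lab h h_a_Lab h_a_Lad)
  have n_d1_Lbc : d1 ∉ Lbc := fun h => ne_d1_b (meet_unique hLab hLbc ne_Lab_Lbc h_d1_Lab h h_b_Lab h_b_Lbc)
  have n_d1_Lbd : d1 ∉ Lbd := fun h => ne_d1_b (meet_unique hLab hLbd ne_Lab_Lbd h_d1_Lab h h_b_Lab h_b_Lbd)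
  have n_d2_Lab : d2 ∉ Lab := fun h => ne_d2_a (meet_unique hLac hLab (Ne.symm ne_Lab_Lac) h_d2_Lac h h_a_Lac h_a_Lab)
  have n_d2_Lad : d2 ∉ Lad := fun h => ne_d2_a (meet_unique hLac hLad ne_Lac_Lad h_d2_Lac h h_a_Lac h_a_Lad)
  have n_d2_Lbc : d2 ∉ Lbc := fun h => ne_d2_b (meet_unique hLbd hLbc (Ne.symm ne_Lbc_Lbd) h_d2_Lbd h h_b_Lbd h_b_Lbc)
  have n_d2_Lcd : d2 ∉ Lcd := fun h => ne_d2_c (meet_unique hLac hLcd ne_Lac_Lcd h_d2_Lac h h_c_Lac h_c_Lcd)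
  have n_d3_Lab : d3 ∉ Lab := fun h => ne_d3_a (meet_unique hLad hLab (Ne.symm ne_Lab_Lad) h_d3_Lad h h_a_Lad h_a_Lab)
  have n_d3_Lac : d3 ∉ Lac := fun h => ne_d3_a (meet_unique hLad hLac (Ne.symm ne_Lac_Lad) h_d3_Lad h h_a_Lad h_a_Lac)
  have n_d3_Lbd : d3 ∉ Lbd := fun h => ne_d3_b (meet_unique hLbc hLbd ne_Lbc_Lbd h_d3_Lbc h h_b_Lbc h_b_Lbd)
  have n_d3_Lcd : d3 ∉ Lcd := fun h => ne_d3_d (meet_unique hLad hLcd ne_Lad_Lcd h_d3_Lad h h_d_Lad h_d_Lcd)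
  have ne_d1_d2 : d1 ≠ d2 := fun h => n_d2_Lab (by rw [← h]; exact h_d1_Lab)
  have ne_d1_d3 : d1 ≠ d3 := fun h => n_d3_Lab (by rw [← h]; exact h_d1_Lab)
  have ne_d2_d3 : d2 ≠ d3 := fun h => n_d3_Lac (by rw [← h]; exact h_d2_Lac)
  obtain ⟨xab, hn_xab, heq_Lab⟩ := line_four hA hLab ne_a_b (Ne.symm ne_d1_a) (Ne.symm ne_d1_b) h_a_Lab h_b_Lab h_d1_Lab
  have h_xab_Lab : xab ∈ Lab := by rw [heq_Lab]; simp
  obtain ⟨ne_xab_a, ne_xab_b, ne_xab_d1⟩ : xab ≠ a ∧ xab ≠ b ∧ xab ≠ d1 := by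
    simpa [Set.mem_insert_iff, not_or] using hn_xab
  obtain ⟨xac, hn_xac, heq_Lac⟩ := line_four hA hLac ne_a_c (Ne.symm ne_d2_a) (Ne.symm ne_d2_c) h_a_Lac h_c_Lac h_d2_Lac
  have h_xac_Lac : xac ∈ Lac := by rw [heq_Lac]; simp
  obtain ⟨ne_xac_a, ne_xac_c, ne_xac_d2⟩ : xac ≠ a ∧ xac ≠ c ∧ xac ≠ d2 := by
    simpa [Set.mem_insert_iff, not_or] using hn_xac
  obtain ⟨xad, hn_xad, heq_Lad⟩ := line_four hA hLad ne_a_d (Ne.symm ne_d3_a) (Ne.symm ne_d3_d) h_a_Lad h_d_Lad h_d3_Lad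
  have h_xad_Lad : xad ∈ Lad := by rw [heq_Lad]; simp
  obtain ⟨ne_xad_a, ne_xad_d, ne_xad_d3⟩ : xad ≠ a ∧ xad ≠ d ∧ xad ≠ d3 := by
    simpa [Set.mem_insert_iff, not_or] using hn_xad
  obtain ⟨xbc, hn_xbc, heq_Lbc⟩ := line_four hA hLbc ne_b_c (Ne.symm ne_d3_b) (Ne.symm ne_d3_c) h_b_Lbc h_c_Lbc h_d3_Lbc
  have h_xbc_Lbc : xbc ∈ Lbc := by rw [heq_Lbc]; simp
  obtain ⟨ne_xbc_b, ne_xbc_c, ne_xbc_d3⟩ : xbc ≠ b ∧ xbc ≠ c ∧ xbc ≠ d3 := by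
    simpa [Set.mem_insert_iff, not_or] using hn_xbc
  obtain ⟨xbd, hn_xbd, heq_Lbd⟩ := line_four hA hLbd ne_b_d (Ne.symm ne_d2_b) (Ne.symm ne_d2_d) h_b_Lbd h_d_Lbd h_d2_Lbd
  have h_xbd_Lbd : xbd ∈ Lbd := by rw [heq_Lbd]; simp
  obtain ⟨ne_xbd_b, ne_xbd_d, ne_xbd_d2⟩ : xbd ≠ b ∧ xbd ≠ d ∧ xbd ≠ d2 := by
    simpa [Set.mem_insert_iff, not_or] using hn_xbd
  obtain ⟨xcd, hn_xcd, heq_Lcd⟩ := line_four hA hLcd ne_c_d (Ne.symm ne_d1_c) (Ne.symm ne_d1_d) h_c_Lcd h_d_Lcd h_d1_Lcd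
  have h_xcd_Lcd : xcd ∈ Lcd := by rw [heq_Lcd]; simp
  obtain ⟨ne_xcd_c, ne_xcd_d, ne_xcd_d1⟩ : xcd ≠ c ∧ xcd ≠ d ∧ xcd ≠ d1 := by
    simpa [Set.mem_insert_iff, not_or] using hn_xcd
  have n_xab_Lac : xab ∉ Lac := fun h => ne_xab_a (meet_unique hLab hLac ne_Lab_Lac h_xab_Lab h h_a_Lab h_a_Lac)
  have n_xab_Lad : xab ∉ Lad := fun h => ne_xab_a (meet_unique hLab hLad ne_Lab_Lad h_xab_Lab h h_a_Lab h_a_Lad)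
  have n_xab_Lbc : xab ∉ Lbc := fun h => ne_xab_b (meet_unique hLab hLbc ne_Lab_Lbc h_xab_Lab h h_b_Lab h_b_Lbc)
  have n_xab_Lbd : xab ∉ Lbd := fun h => ne_xab_b (meet_unique hLab hLbd ne_Lab_Lbd h_xab_Lab h h_b_Lab h_b_Lbd)
  have n_xab_Lcd : xab ∉ Lcd := fun h => ne_xab_d1 (meet_unique hLab hLcd ne_Lab_Lcd h_xab_Lab h h_d1_Lab h_d1_Lcd)
  have n_xac_Lab : xac ∉ Lab := fun h => ne_xac_a (meet_unique hLac hLab (Ne.symm ne_Lab_Lac) h_xac_Lac h h_a_Lac h_a_Lab)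
  have n_xac_Lad : xac ∉ Lad := fun h => ne_xac_a (meet_unique hLac hLad ne_Lac_Lad h_xac_Lac h h_a_Lac h_a_Lad)
  have n_xac_Lbc : xac ∉ Lbc := fun h => ne_xac_c (meet_unique hLac hLbc ne_Lac_Lbc h_xac_Lac h h_c_Lac h_c_Lbc)
  have n_xac_Lcd : xac ∉ Lcd := fun h => ne_xac_c (meet_unique hLac hLcd ne_Lac_Lcd h_xac_Lac h h_c_Lac h_c_Lcd)
  have n_xac_Lbd : xac ∉ Lbd := fun h => ne_xac_d2 (meet_unique hLac hLbd ne_Lac_Lbd h_xac_Lac h h_d2_Lac h_d2_Lbd)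
  have n_xad_Lab : xad ∉ Lab := fun h => ne_xad_a (meet_unique hLad hLab (Ne.symm ne_Lab_Lad) h_xad_Lad h h_a_Lad h_a_Lab)
  have n_xad_Lac : xad ∉ Lac := fun h => ne_xad_a (meet_unique hLad hLac (Ne.symm ne_Lac_Lad) h_xad_Lad h h_a_Lad h_a_Lac)
  have n_xad_Lbd : xad ∉ Lbd := fun h => ne_xad_d (meet_unique hLad hLbd ne_Lad_Lbd h_xad_Lad h h_d_Lad h_d_Lbd)
  have n_xad_Lcd : xad ∉ Lcd := fun h => ne_xad_d (meet_unique hLad hLcd ne_Lad_Lcd h_xad_Lad h h_d_Lad h_d_Lcd)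
  have n_xad_Lbc : xad ∉ Lbc := fun h => ne_xad_d3 (meet_unique hLad hLbc ne_Lad_Lbc h_xad_Lad h h_d3_Lad h_d3_Lbc)
  have n_xbc_Lab : xbc ∉ Lab := fun h => ne_xbc_b (meet_unique hLbc hLab (Ne.symm ne_Lab_Lbc) h_xbc_Lbc h h_b_Lbc h_b_Lab)
  have n_xbc_Lbd : xbc ∉ Lbd := fun h => ne_xbc_b (meet_unique hLbc hLbd ne_Lbc_Lbd h_xbc_Lbc h h_b_Lbc h_b_Lbd)
  have n_xbc_Lac : xbc ∉ Lac := fun h => ne_xbc_c (meet_unique hLbc hLac (Ne.symm ne_Lac_Lbc) h_xbc_Lbc h h_c_Lbc h_c_Lac)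
  have n_xbc_Lcd : xbc ∉ Lcd := fun h => ne_xbc_c (meet_unique hLbc hLcd ne_Lbc_Lcd h_xbc_Lbc h h_c_Lbc h_c_Lcd)
  have n_xbc_Lad : xbc ∉ Lad := fun h => ne_xbc_d3 (meet_unique hLbc hLad (Ne.symm ne_Lad_Lbc) h_xbc_Lbc h h_d3_Lbc h_d3_Lad)
  have n_xbd_Lab : xbd ∉ Lab := fun h => ne_xbd_b (meet_unique hLbd hLab (Ne.symm ne_Lab_Lbd) h_xbd_Lbd h h_b_Lbd h_b_Lab)
  have n_xbd_Lbc : xbd ∉ Lbc := fun h => ne_xbd_b (meet_unique hLbd hLbc (Ne.symm ne_Lbc_Lbd) h_xbd_Lbd h h_b_Lbd h_b_Lbc)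
  have n_xbd_Lad : xbd ∉ Lad := fun h => ne_xbd_d (meet_unique hLbd hLad (Ne.symm ne_Lad_Lbd) h_xbd_Lbd h h_d_Lbd h_d_Lad)
  have n_xbd_Lcd : xbd ∉ Lcd := fun h => ne_xbd_d (meet_unique hLbd hLcd ne_Lbd_Lcd h_xbd_Lbd h h_d_Lbd h_d_Lcd)
  have n_xbd_Lac : xbd ∉ Lac := fun h => ne_xbd_d2 (meet_unique hLbd hLac (Ne.symm ne_Lac_Lbd) h_xbd_Lbd h h_d2_Lbd h_d2_Lac)
  have n_xcd_Lac : xcd ∉ Lac := fun h => ne_xcd_c (meet_unique hLcd hLac (Ne.symm ne_Lac_Lcd) h_xcd_Lcd h h_c_Lcd h_c_Lac)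
  have n_xcd_Lbc : xcd ∉ Lbc := fun h => ne_xcd_c (meet_unique hLcd hLbc (Ne.symm ne_Lbc_Lcd) h_xcd_Lcd h h_c_Lcd h_c_Lbc)
  have n_xcd_Lad : xcd ∉ Lad := fun h => ne_xcd_d (meet_unique hLcd hLad (Ne.symm ne_Lad_Lcd) h_xcd_Lcd h h_d_Lcd h_d_Lad)
  have n_xcd_Lbd : xcd ∉ Lbd := fun h => ne_xcd_d (meet_unique hLcd hLbd (Ne.symm ne_Lbd_Lcd) h_xcd_Lcd h h_d_Lcd h_d_Lbd)
  have n_xcd_Lab : xcd ∉ Lab := fun h => ne_xcd_d1 (meet_unique hLcd hLab (Ne.symm ne_Lab_Lcd) h_xcd_Lcd h h_d1_Lcd h_d1_Lab)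
  have ne_xab_c : xab ≠ c := fun h => n_c_Lab (by rw [← h]; exact h_xab_Lab)
  have ne_xab_d : xab ≠ d := fun h => n_d_Lab (by rw [← h]; exact h_xab_Lab)
  have ne_xac_b : xac ≠ b := fun h => n_b_Lac (by rw [← h]; exact h_xac_Lac)
  have ne_xac_d : xac ≠ d := fun h => n_d_Lac (by rw [← h]; exact h_xac_Lac)
  have ne_xad_b : xad ≠ b := fun h => n_b_Lad (by rw [← h]; exact h_xad_Lad)
  have ne_xad_c : xad ≠ c := fun h => n_c_Lad (by rw [← h]; exact h_xad_Lad)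
  have ne_xbc_a : xbc ≠ a := fun h => n_a_Lbc (by rw [← h]; exact h_xbc_Lbc)
  have ne_xbc_d : xbc ≠ d := fun h => n_d_Lbc (by rw [← h]; exact h_xbc_Lbc)
  have ne_xbd_a : xbd ≠ a := fun h => n_a_Lbd (by rw [← h]; exact h_xbd_Lbd)
  have ne_xbd_c : xbd ≠ c := fun h => n_c_Lbd (by rw [← h]; exact h_xbd_Lbd)
  have ne_xcd_a : xcd ≠ a := fun h => n_a_Lcd (by rw [← h]; exact h_xcd_Lcd)
  have ne_xcd_b : xcd ≠ b := fun h => n_b_Lcd (by rw [← h]; exact h_xcd_Lcd)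
  have ne_xab_d2 : xab ≠ d2 := fun h => n_d2_Lab (by rw [← h]; exact h_xab_Lab)
  have ne_xab_d3 : xab ≠ d3 := fun h => n_d3_Lab (by rw [← h]; exact h_xab_Lab)
  have ne_xac_d1 : xac ≠ d1 := fun h => n_d1_Lac (by rw [← h]; exact h_xac_Lac)
  have ne_xac_d3 : xac ≠ d3 := fun h => n_d3_Lac (by rw [← h]; exact h_xac_Lac)
  have ne_xad_d1 : xad ≠ d1 := fun h => n_d1_Lad (by rw [← h]; exact h_xad_Lad)
  have ne_xad_d2 : xad ≠ d2 := fun h => n_d2_Lad (by rw [← h]; exact h_xad_Lad)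
  have ne_xbc_d1 : xbc ≠ d1 := fun h => n_d1_Lbc (by rw [← h]; exact h_xbc_Lbc)
  have ne_xbc_d2 : xbc ≠ d2 := fun h => n_d2_Lbc (by rw [← h]; exact h_xbc_Lbc)
  have ne_xbd_d1 : xbd ≠ d1 := fun h => n_d1_Lbd (by rw [← h]; exact h_xbd_Lbd)
  have ne_xbd_d3 : xbd ≠ d3 := fun h => n_d3_Lbd (by rw [← h]; exact h_xbd_Lbd)
  have ne_xcd_d2 : xcd ≠ d2 := fun h => n_d2_Lcd (by rw [← h]; exact h_xcd_Lcd)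
  have ne_xcd_d3 : xcd ≠ d3 := fun h => n_d3_Lcd (by rw [← h]; exact h_xcd_Lcd)
  have ne_xab_xac : xab ≠ xac := fun h => n_xab_Lac (by rw [h]; exact h_xac_Lac)
  have ne_xab_xad : xab ≠ xad := fun h => n_xab_Lad (by rw [h]; exact h_xad_Lad)
  have ne_xab_xbc : xab ≠ xbc := fun h => n_xab_Lbc (by rw [h]; exact h_xbc_Lbc)
  have ne_xab_xbd : xab ≠ xbd := fun h => n_xab_Lbd (by rw [h]; exact h_xbd_Lbd)
  have ne_xab_xcd : xab ≠ xcd := fun h => n_xab_Lcd (by rw [h]; exact h_xcd_Lcd)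
  have ne_xac_xad : xac ≠ xad := fun h => n_xac_Lad (by rw [h]; exact h_xad_Lad)
  have ne_xac_xbc : xac ≠ xbc := fun h => n_xac_Lbc (by rw [h]; exact h_xbc_Lbc)
  have ne_xac_xbd : xac ≠ xbd := fun h => n_xac_Lbd (by rw [h]; exact h_xbd_Lbd)
  have ne_xac_xcd : xac ≠ xcd := fun h => n_xac_Lcd (by rw [h]; exact h_xcd_Lcd)
  have ne_xad_xbc : xad ≠ xbc := fun h => n_xad_Lbc (by rw [h]; exact h_xbc_Lbc)
  have ne_xad_xbd : xad ≠ xbd := fun h => n_xad_Lbd (by rw [h]; exact h_xbd_Lbd)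
  have ne_xad_xcd : xad ≠ xcd := fun h => n_xad_Lcd (by rw [h]; exact h_xcd_Lcd)
  have ne_xbc_xbd : xbc ≠ xbd := fun h => n_xbc_Lbd (by rw [h]; exact h_xbd_Lbd)
  have ne_xbc_xcd : xbc ≠ xcd := fun h => n_xbc_Lcd (by rw [h]; exact h_xcd_Lcd)
  have ne_xbd_xcd : xbd ≠ xcd := fun h => n_xbd_Lcd (by rw [h]; exact h_xcd_Lcd)
  have hni0 : a ∉ ({b, c, d, d1, d2, d3, xab, xac, xad, xbc, xbd, xcd} : Set X) := by
    simp only [Set.mem_insert_iff, Set.mem_singleton_iff, not_or]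
    exact ⟨ne_a_b, ne_a_c, ne_a_d, (Ne.symm ne_d1_a), (Ne.symm ne_d2_a), (Ne.symm ne_d3_a), (Ne.symm ne_xab_a), (Ne.symm ne_xac_a), (Ne.symm ne_xad_a), (Ne.symm ne_xbc_a), (Ne.symm ne_xbd_a), (Ne.symm ne_xcd_a)⟩
  have hni1 : b ∉ ({c, d, d1, d2, d3, xab, xac, xad, xbc, xbd, xcd} : Set X) := by
    simp only [Set.mem_insert_iff, Set.mem_singleton_iff, not_or]
    exact ⟨ne_b_c, ne_b_d, (Ne.symm ne_d1_b), (Ne.symm ne_d2_b), (Ne.symm ne_d3_b), (Ne.symm ne_xab_b), (Ne.symm ne_xac_b), (Ne.symm ne_xad_b), (Ne.symm ne_xbc_b), (Ne.symm ne_xbd_b), (Ne.symm ne_xcd_b)⟩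
  have hni2 : c ∉ ({d, d1, d2, d3, xab, xac, xad, xbc, xbd, xcd} : Set X) := by
    simp only [Set.mem_insert_iff, Set.mem_singleton_iff, not_or]
    exact ⟨ne_c_d, (Ne.symm ne_d1_c), (Ne.symm ne_d2_c), (Ne.symm ne_d3_c), (Ne.symm ne_xab_c), (Ne.symm ne_xac_c), (Ne.symm ne_xad_c), (Ne.symm ne_xbc_c), (Ne.symm ne_xbd_c), (Ne.symm ne_xcd_c)⟩
  have hni3 : d ∉ ({d1, d2, d3, xab, xac, xad, xbc, xbd, xcd} : Set X) := by
    simp only [Set.mem_insert_iff, Set.mem_singleton_iff, not_or]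
    exact ⟨(Ne.symm ne_d1_d), (Ne.symm ne_d2_d), (Ne.symm ne_d3_d), (Ne.symm ne_xab_d), (Ne.symm ne_xac_d), (Ne.symm ne_xad_d), (Ne.symm ne_xbc_d), (Ne.symm ne_xbd_d), (Ne.symm ne_xcd_d)⟩
  have hni4 : d1 ∉ ({d2, d3, xab, xac, xad, xbc, xbd, xcd} : Set X) := by
    simp only [Set.mem_insert_iff, Set.mem_singleton_iff, not_or]
    exact ⟨ne_d1_d2, ne_d1_d3, (Ne.symm ne_xab_d1), (Ne.symm ne_xac_d1), (Ne.symm ne_xad_d1), (Ne.symm ne_xbc_d1), (Ne.symm ne_xbd_d1), (Ne.symm ne_xcd_d1)⟩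
  have hni5 : d2 ∉ ({d3, xab, xac, xad, xbc, xbd, xcd} : Set X) := by
    simp only [Set.mem_insert_iff, Set.mem_singleton_iff, not_or]
    exact ⟨ne_d2_d3, (Ne.symm ne_xab_d2), (Ne.symm ne_xac_d2), (Ne.symm ne_xad_d2), (Ne.symm ne_xbc_d2), (Ne.symm ne_xbd_d2), (Ne.symm ne_xcd_d2)⟩
  have hni6 : d3 ∉ ({xab, xac, xad, xbc, xbd, xcd} : Set X) := by
    simp only [Set.mem_insert_iff, Set.mem_singleton_iff, not_or]
    exact ⟨(Ne.symm ne_xab_d3), (Ne.symm ne_xac_d3), (Ne.symm ne_xad_d3), (Ne.symm ne_xbc_d3), (Ne.symm ne_xbd_d3), (Ne.symm ne_xcd_d3)⟩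
  have hni7 : xab ∉ ({xac, xad, xbc, xbd, xcd} : Set X) := by
    simp only [Set.mem_insert_iff, Set.mem_singleton_iff, not_or]
    exact ⟨ne_xab_xac, ne_xab_xad, ne_xab_xbc, ne_xab_xbd, ne_xab_xcd⟩
  have hni8 : xac ∉ ({xad, xbc, xbd, xcd} : Set X) := by
    simp only [Set.mem_insert_iff, Set.mem_singleton_iff, not_or]
    exact ⟨ne_xac_xad, ne_xac_xbc, ne_xac_xbd, ne_xac_xcd⟩
  have hni9 : xad ∉ ({xbc, xbd, xcd} : Set X) := by
    simp only [Set.mem_insert_iff, Set.mem_singleton_iff, not_or]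
    exact ⟨ne_xad_xbc, ne_xad_xbd, ne_xad_xcd⟩
  have hni10 : xbc ∉ ({xbd, xcd} : Set X) := by
    simp only [Set.mem_insert_iff, Set.mem_singleton_iff, not_or]
    exact ⟨ne_xbc_xbd, ne_xbc_xcd⟩
  have hni11 : xbd ∉ ({xcd} : Set X) := by
    simp only [Set.mem_insert_iff, Set.mem_singleton_iff, not_or]
    exact ne_xbd_xcd
  have hunivcard : ({a, b, c, d, d1, d2, d3, xab, xac, xad, xbc, xbd, xcd} : Set X).encard = 13 := by
    rw [Set.encard_insert_of_notMem hni0, Set.encard_insert_of_notMem hni1, Set.encard_insert_of_notMem hni2, Set.encard_insert_of_notMem hni3, Set.encard_insert_of_notMem hni4, Set.encard_insert_of_notMem hni5, Set.encard_insert_of_notMem hni6, Set.encard_insert_of_notMem hni7, Set.encard_insert_of_notMem hni8, Set.encard_insert_of_notMem hni9, Set.encard_insert_of_notMem hni10, Set.encard_insert_of_notMem hni11, Set.encard_singleton]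
    norm_num
  have huniv : (Set.univ : Set X) = ({a, b, c, d, d1, d2, d3, xab, xac, xad, xbc, xbd, xcd} : Set X) := by
    have hufin : (Set.univ : Set X).Finite := Set.finite_of_encard_eq_coe (show (Set.univ : Set X).encard = ((13:ℕ) : ℕ∞) by exact_mod_cast hA.2.2)
    refine (Set.Finite.eq_of_subset_of_encard_le' hufin (Set.subset_univ _) ?_).symm
    rw [hA.2.2, hunivcard]
  obtain ⟨La, hLa, h_a_La, h_xbc_La⟩ := A.exists_line a xbc (Ne.symm ne_xbc_a)
  have n_b_La : b ∉ La := fun h => n_xbc_Lab (by rw [← eq_line hLa hLab ne_a_b h_a_La h h_a_Lab h_b_Lab]; exact h_xbc_La)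
  have n_d1_La : d1 ∉ La := fun h => n_xbc_Lab (by rw [← eq_line hLa hLab (Ne.symm ne_d1_a) h_a_La h h_a_Lab h_d1_Lab]; exact h_xbc_La)
  have n_xab_La : xab ∉ La := fun h => n_xbc_Lab (by rw [← eq_line hLa hLab (Ne.symm ne_xab_a) h_a_La h h_a_Lab h_xab_Lab]; exact h_xbc_La)
  have n_c_La : c ∉ La := fun h => n_xbc_Lac (by rw [← eq_line hLa hLac ne_a_c h_a_La h h_a_Lac h_c_Lac]; exact h_xbc_La)
  have n_d2_La : d2 ∉ La := fun h => n_xbc_Lac (by rw [← eq_line hLa hLac (Ne.symm ne_d2_a) h_a_La h h_a_Lac h_d2_Lac]; exact h_xbc_La)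
  have n_xac_La : xac ∉ La := fun h => n_xbc_Lac (by rw [← eq_line hLa hLac (Ne.symm ne_xac_a) h_a_La h h_a_Lac h_xac_Lac]; exact h_xbc_La)
  have n_d_La : d ∉ La := fun h => n_xbc_Lad (by rw [← eq_line hLa hLad ne_a_d h_a_La h h_a_Lad h_d_Lad]; exact h_xbc_La)
  have n_d3_La : d3 ∉ La := fun h => n_xbc_Lad (by rw [← eq_line hLa hLad (Ne.symm ne_d3_a) h_a_La h h_a_Lad h_d3_Lad]; exact h_xbc_La)
  have n_xad_La : xad ∉ La := fun h => n_xbc_Lad (by rw [← eq_line hLa hLad (Ne.symm ne_xad_a) h_a_La h h_a_Lad h_xad_Lad]; exact h_xbc_La)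
  have hsub_La : La ⊆ ({a, xbc, xbd, xcd} : Set X) := by
    intro z hz
    have hzu := Set.mem_univ z
    rw [huniv] at hzu
    simp only [Set.mem_insert_iff, Set.mem_singleton_iff] at hzu ⊢
    rcases hzu with rfl|rfl|rfl|rfl|rfl|rfl|rfl|rfl|rfl|rfl|rfl|rfl|rfl
    · simp
    · exact absurd hz n_b_La
    · exact absurd hz n_c_La
    · exact absurd hz n_d_La
    · exact absurd hz n_d1_La
    · exact absurd hz n_d2_La
    · exact absurd hz n_d3_La
    · exact absurd hz n_xab_La
    · exact absurd hz n_xac_La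
    · exact absurd hz n_xad_La
    · simp
    · simp
    · simp
  have heq_La : La = ({a, xbc, xbd, xcd} : Set X) := Set.Finite.eq_of_subset_of_encard_le (line_finite hA hLa) hsub_La (by rw [encard4 (Ne.symm ne_xbc_a) (Ne.symm ne_xbd_a) (Ne.symm ne_xcd_a) ne_xbc_xbd ne_xbc_xcd ne_xbd_xcd , line_encard hA hLa])
  have h_xbd_La : xbd ∈ La := by rw [heq_La]; simp
  have h_xcd_La : xcd ∈ La := by rw [heq_La]; simp
  obtain ⟨Lb, hLb, h_b_Lb, h_xac_Lb⟩ := A.exists_line b xac (Ne.symm ne_xac_b)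
  have n_a_Lb : a ∉ Lb := fun h => n_xac_Lab (by rw [← eq_line hLb hLab (Ne.symm ne_a_b) h_b_Lb h h_b_Lab h_a_Lab]; exact h_xac_Lb)
  have n_d1_Lb : d1 ∉ Lb := fun h => n_xac_Lab (by rw [← eq_line hLb hLab (Ne.symm ne_d1_b) h_b_Lb h h_b_Lab h_d1_Lab]; exact h_xac_Lb)
  have n_xab_Lb : xab ∉ Lb := fun h => n_xac_Lab (by rw [← eq_line hLb hLab (Ne.symm ne_xab_b) h_b_Lb h h_b_Lab h_xab_Lab]; exact h_xac_Lb)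
  have n_c_Lb : c ∉ Lb := fun h => n_xac_Lbc (by rw [← eq_line hLb hLbc ne_b_c h_b_Lb h h_b_Lbc h_c_Lbc]; exact h_xac_Lb)
  have n_d3_Lb : d3 ∉ Lb := fun h => n_xac_Lbc (by rw [← eq_line hLb hLbc (Ne.symm ne_d3_b) h_b_Lb h h_b_Lbc h_d3_Lbc]; exact h_xac_Lb)
  have n_xbc_Lb : xbc ∉ Lb := fun h => n_xac_Lbc (by rw [← eq_line hLb hLbc (Ne.symm ne_xbc_b) h_b_Lb h h_b_Lbc h_xbc_Lbc]; exact h_xac_Lb)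
  have n_d_Lb : d ∉ Lb := fun h => n_xac_Lbd (by rw [← eq_line hLb hLbd ne_b_d h_b_Lb h h_b_Lbd h_d_Lbd]; exact h_xac_Lb)
  have n_d2_Lb : d2 ∉ Lb := fun h => n_xac_Lbd (by rw [← eq_line hLb hLbd (Ne.symm ne_d2_b) h_b_Lb h h_b_Lbd h_d2_Lbd]; exact h_xac_Lb)
  have n_xbd_Lb : xbd ∉ Lb := fun h => n_xac_Lbd (by rw [← eq_line hLb hLbd (Ne.symm ne_xbd_b) h_b_Lb h h_b_Lbd h_xbd_Lbd]; exact h_xac_Lb)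
  have hsub_Lb : Lb ⊆ ({b, xac, xad, xcd} : Set X) := by
    intro z hz
    have hzu := Set.mem_univ z
    rw [huniv] at hzu
    simp only [Set.mem_insert_iff, Set.mem_singleton_iff] at hzu ⊢
    rcases hzu with rfl|rfl|rfl|rfl|rfl|rfl|rfl|rfl|rfl|rfl|rfl|rfl|rfl
    · exact absurd hz n_a_Lb
    · simp
    · exact absurd hz n_c_Lb
    · exact absurd hz n_d_Lb
    · exact absurd hz n_d1_Lb
    · exact absurd hz n_d2_Lb
    · exact absurd hz n_d3_Lb
    · exact absurd hz n_xab_Lb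
    · simp
    · simp
    · exact absurd hz n_xbc_Lb
    · exact absurd hz n_xbd_Lb
    · simp
  have heq_Lb : Lb = ({b, xac, xad, xcd} : Set X) := Set.Finite.eq_of_subset_of_encard_le (line_finite hA hLb) hsub_Lb (by rw [encard4 (Ne.symm ne_xac_b) (Ne.symm ne_xad_b) (Ne.symm ne_xcd_b) ne_xac_xad ne_xac_xcd ne_xad_xcd , line_encard hA hLb])
  have h_xad_Lb : xad ∈ Lb := by rw [heq_Lb]; simp
  have h_xcd_Lb : xcd ∈ Lb := by rw [heq_Lb]; simp
  obtain ⟨Lc, hLc, h_c_Lc, h_xab_Lc⟩ := A.exists_line c xab (Ne.symm ne_xab_c)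
  have n_a_Lc : a ∉ Lc := fun h => n_xab_Lac (by rw [← eq_line hLc hLac (Ne.symm ne_a_c) h_c_Lc h h_c_Lac h_a_Lac]; exact h_xab_Lc)
  have n_d2_Lc : d2 ∉ Lc := fun h => n_xab_Lac (by rw [← eq_line hLc hLac (Ne.symm ne_d2_c) h_c_Lc h h_c_Lac h_d2_Lac]; exact h_xab_Lc)
  have n_xac_Lc : xac ∉ Lc := fun h => n_xab_Lac (by rw [← eq_line hLc hLac (Ne.symm ne_xac_c) h_c_Lc h h_c_Lac h_xac_Lac]; exact h_xab_Lc)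
  have n_b_Lc : b ∉ Lc := fun h => n_xab_Lbc (by rw [← eq_line hLc hLbc (Ne.symm ne_b_c) h_c_Lc h h_c_Lbc h_b_Lbc]; exact h_xab_Lc)
  have n_d3_Lc : d3 ∉ Lc := fun h => n_xab_Lbc (by rw [← eq_line hLc hLbc (Ne.symm ne_d3_c) h_c_Lc h h_c_Lbc h_d3_Lbc]; exact h_xab_Lc)
  have n_xbc_Lc : xbc ∉ Lc := fun h => n_xab_Lbc (by rw [← eq_line hLc hLbc (Ne.symm ne_xbc_c) h_c_Lc h h_c_Lbc h_xbc_Lbc]; exact h_xab_Lc)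
  have n_d_Lc : d ∉ Lc := fun h => n_xab_Lcd (by rw [← eq_line hLc hLcd ne_c_d h_c_Lc h h_c_Lcd h_d_Lcd]; exact h_xab_Lc)
  have n_d1_Lc : d1 ∉ Lc := fun h => n_xab_Lcd (by rw [← eq_line hLc hLcd (Ne.symm ne_d1_c) h_c_Lc h h_c_Lcd h_d1_Lcd]; exact h_xab_Lc)
  have n_xcd_Lc : xcd ∉ Lc := fun h => n_xab_Lcd (by rw [← eq_line hLc hLcd (Ne.symm ne_xcd_c) h_c_Lc h h_c_Lcd h_xcd_Lcd]; exact h_xab_Lc)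
  have hsub_Lc : Lc ⊆ ({c, xab, xad, xbd} : Set X) := by
    intro z hz
    have hzu := Set.mem_univ z
    rw [huniv] at hzu
    simp only [Set.mem_insert_iff, Set.mem_singleton_iff] at hzu ⊢
    rcases hzu with rfl|rfl|rfl|rfl|rfl|rfl|rfl|rfl|rfl|rfl|rfl|rfl|rfl
    · exact absurd hz n_a_Lc
    · exact absurd hz n_b_Lc
    · simp
    · exact absurd hz n_d_Lc
    · exact absurd hz n_d1_Lc
    · exact absurd hz n_d2_Lc
    · exact absurd hz n_d3_Lc
    · simp
    · exact absurd hz n_xac_Lc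
    · simp
    · exact absurd hz n_xbc_Lc
    · simp
    · exact absurd hz n_xcd_Lc
  have heq_Lc : Lc = ({c, xab, xad, xbd} : Set X) := Set.Finite.eq_of_subset_of_encard_le (line_finite hA hLc) hsub_Lc (by rw [encard4 (Ne.symm ne_xab_c) (Ne.symm ne_xad_c) (Ne.symm ne_xbd_c) ne_xab_xad ne_xab_xbd ne_xad_xbd , line_encard hA hLc])
  have h_xad_Lc : xad ∈ Lc := by rw [heq_Lc]; simp
  have h_xbd_Lc : xbd ∈ Lc := by rw [heq_Lc]; simp
  obtain ⟨Ld, hLd, h_d_Ld, h_xab_Ld⟩ := A.exists_line d xab (Ne.symm ne_xab_d)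
  have n_a_Ld : a ∉ Ld := fun h => n_xab_Lad (by rw [← eq_line hLd hLad (Ne.symm ne_a_d) h_d_Ld h h_d_Lad h_a_Lad]; exact h_xab_Ld)
  have n_d3_Ld : d3 ∉ Ld := fun h => n_xab_Lad (by rw [← eq_line hLd hLad (Ne.symm ne_d3_d) h_d_Ld h h_d_Lad h_d3_Lad]; exact h_xab_Ld)
  have n_xad_Ld : xad ∉ Ld := fun h => n_xab_Lad (by rw [← eq_line hLd hLad (Ne.symm ne_xad_d) h_d_Ld h h_d_Lad h_xad_Lad]; exact h_xab_Ld)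
  have n_b_Ld : b ∉ Ld := fun h => n_xab_Lbd (by rw [← eq_line hLd hLbd (Ne.symm ne_b_d) h_d_Ld h h_d_Lbd h_b_Lbd]; exact h_xab_Ld)
  have n_d2_Ld : d2 ∉ Ld := fun h => n_xab_Lbd (by rw [← eq_line hLd hLbd (Ne.symm ne_d2_d) h_d_Ld h h_d_Lbd h_d2_Lbd]; exact h_xab_Ld)
  have n_xbd_Ld : xbd ∉ Ld := fun h => n_xab_Lbd (by rw [← eq_line hLd hLbd (Ne.symm ne_xbd_d) h_d_Ld h h_d_Lbd h_xbd_Lbd]; exact h_xab_Ld)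
  have n_c_Ld : c ∉ Ld := fun h => n_xab_Lcd (by rw [← eq_line hLd hLcd (Ne.symm ne_c_d) h_d_Ld h h_d_Lcd h_c_Lcd]; exact h_xab_Ld)
  have n_d1_Ld : d1 ∉ Ld := fun h => n_xab_Lcd (by rw [← eq_line hLd hLcd (Ne.symm ne_d1_d) h_d_Ld h h_d_Lcd h_d1_Lcd]; exact h_xab_Ld)
  have n_xcd_Ld : xcd ∉ Ld := fun h => n_xab_Lcd (by rw [← eq_line hLd hLcd (Ne.symm ne_xcd_d) h_d_Ld h h_d_Lcd h_xcd_Lcd]; exact h_xab_Ld)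
  have hsub_Ld : Ld ⊆ ({d, xab, xac, xbc} : Set X) := by
    intro z hz
    have hzu := Set.mem_univ z
    rw [huniv] at hzu
    simp only [Set.mem_insert_iff, Set.mem_singleton_iff] at hzu ⊢
    rcases hzu with rfl|rfl|rfl|rfl|rfl|rfl|rfl|rfl|rfl|rfl|rfl|rfl|rfl
    · exact absurd hz n_a_Ld
    · exact absurd hz n_b_Ld
    · exact absurd hz n_c_Ld
    · simp
    · exact absurd hz n_d1_Ld
    · exact absurd hz n_d2_Ld
    · exact absurd hz n_d3_Ld
    · simp
    · simp
    · exact absurd hz n_xad_Ld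
    · simp
    · exact absurd hz n_xbd_Ld
    · exact absurd hz n_xcd_Ld
  have heq_Ld : Ld = ({d, xab, xac, xbc} : Set X) := Set.Finite.eq_of_subset_of_encard_le (line_finite hA hLd) hsub_Ld (by rw [encard4 (Ne.symm ne_xab_d) (Ne.symm ne_xac_d) (Ne.symm ne_xbc_d) ne_xab_xac ne_xab_xbc ne_xac_xbc , line_encard hA hLd])
  have h_xac_Ld : xac ∈ Ld := by rw [heq_Ld]; simp
  have h_xbc_Ld : xbc ∈ Ld := by rw [heq_Ld]; simp
  have ne_La_Lb : La ≠ Lb := fun h => n_a_Lb (by rw [← h]; exact h_a_La)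
  have ncol_ddd : ∀ M' ∈ A.lines, d1 ∈ M' → d2 ∈ M' → d3 ∈ M' → False := by
    intro M' hM' hm1 hm2 hm3
    obtain ⟨w, hwn, hMeq⟩ := line_four hA hM' ne_d1_d2 ne_d1_d3 ne_d2_d3 hm1 hm2 hm3
    have hwLa : w ∈ La := by
      obtain ⟨z, hz1, hz2⟩ := hA.1.1 M' hM' La hLa
      rw [hMeq] at hz1
      simp only [Set.mem_insert_iff, Set.mem_singleton_iff] at hz1
      rcases hz1 with rfl|rfl|rfl|rfl
      · exact absurd hz2 n_d1_La
      · exact absurd hz2 n_d2_La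
      · exact absurd hz2 n_d3_La
      · exact hz2
    have hwLb : w ∈ Lb := by
      obtain ⟨z, hz1, hz2⟩ := hA.1.1 M' hM' Lb hLb
      rw [hMeq] at hz1
      simp only [Set.mem_insert_iff, Set.mem_singleton_iff] at hz1
      rcases hz1 with rfl|rfl|rfl|rfl
      · exact absurd hz2 n_d1_Lb
      · exact absurd hz2 n_d2_Lb
      · exact absurd hz2 n_d3_Lb
      · exact hz2
    have hwLc : w ∈ Lc := by
      obtain ⟨z, hz1, hz2⟩ := hA.1.1 M' hM' Lc hLc
      rw [hMeq] at hz1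
      simp only [Set.mem_insert_iff, Set.mem_singleton_iff] at hz1
      rcases hz1 with rfl|rfl|rfl|rfl
      · exact absurd hz2 n_d1_Lc
      · exact absurd hz2 n_d2_Lc
      · exact absurd hz2 n_d3_Lc
      · exact hz2
    have hw_xcd : w = xcd := meet_unique hLa hLb ne_La_Lb hwLa hwLb h_xcd_La h_xcd_Lb
    rw [hw_xcd] at hwLc
    exact n_xcd_Lc hwLc
  obtain ⟨M1, hM1, h_d1_M1, h_d2_M1⟩ := A.exists_line d1 d2 ne_d1_d2
  have n_a_M1 : a ∉ M1 := fun h => n_d2_Lab (by rw [← eq_line hM1 hLab ne_d1_a h_d1_M1 h h_d1_Lab h_a_Lab]; exact h_d2_M1)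
  have n_b_M1 : b ∉ M1 := fun h => n_d2_Lab (by rw [← eq_line hM1 hLab ne_d1_b h_d1_M1 h h_d1_Lab h_b_Lab]; exact h_d2_M1)
  have n_xab_M1 : xab ∉ M1 := fun h => n_d2_Lab (by rw [← eq_line hM1 hLab (Ne.symm ne_xab_d1) h_d1_M1 h h_d1_Lab h_xab_Lab]; exact h_d2_M1)
  have n_c_M1 : c ∉ M1 := fun h => n_d2_Lcd (by rw [← eq_line hM1 hLcd ne_d1_c h_d1_M1 h h_d1_Lcd h_c_Lcd]; exact h_d2_M1)
  have n_d_M1 : d ∉ M1 := fun h => n_d2_Lcd (by rw [← eq_line hM1 hLcd ne_d1_d h_d1_M1 h h_d1_Lcd h_d_Lcd]; exact h_d2_M1)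
  have n_xcd_M1 : xcd ∉ M1 := fun h => n_d2_Lcd (by rw [← eq_line hM1 hLcd (Ne.symm ne_xcd_d1) h_d1_M1 h h_d1_Lcd h_xcd_Lcd]; exact h_d2_M1)
  have n_xac_M1 : xac ∉ M1 := fun h => n_d1_Lac (by rw [← eq_line hM1 hLac (Ne.symm ne_xac_d2) h_d2_M1 h h_d2_Lac h_xac_Lac]; exact h_d1_M1)
  have n_xbd_M1 : xbd ∉ M1 := fun h => n_d1_Lbd (by rw [← eq_line hM1 hLbd (Ne.symm ne_xbd_d2) h_d2_M1 h h_d2_Lbd h_xbd_Lbd]; exact h_d1_M1)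
  have n_d3_M1 : d3 ∉ M1 := fun h => ncol_ddd M1 hM1 h_d1_M1 h_d2_M1 h
  have hsub_M1 : M1 ⊆ ({d1, d2, xad, xbc} : Set X) := by
    intro z hz
    have hzu := Set.mem_univ z
    rw [huniv] at hzu
    simp only [Set.mem_insert_iff, Set.mem_singleton_iff] at hzu ⊢
    rcases hzu with rfl|rfl|rfl|rfl|rfl|rfl|rfl|rfl|rfl|rfl|rfl|rfl|rfl
    · exact absurd hz n_a_M1
    · exact absurd hz n_b_M1
    · exact absurd hz n_c_M1
    · exact absurd hz n_d_M1
    · simp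
    · simp
    · exact absurd hz n_d3_M1
    · exact absurd hz n_xab_M1
    · exact absurd hz n_xac_M1
    · simp
    · simp
    · exact absurd hz n_xbd_M1
    · exact absurd hz n_xcd_M1
  have heq_M1 : M1 = ({d1, d2, xad, xbc} : Set X) := Set.Finite.eq_of_subset_of_encard_le (line_finite hA hM1) hsub_M1 (by rw [encard4 ne_d1_d2 (Ne.symm ne_xad_d1) (Ne.symm ne_xbc_d1) (Ne.symm ne_xad_d2) (Ne.symm ne_xbc_d2) ne_xad_xbc , line_encard hA hM1])
  have h_xad_M1 : xad ∈ M1 := by rw [heq_M1]; simp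
  have h_xbc_M1 : xbc ∈ M1 := by rw [heq_M1]; simp
  obtain ⟨M2, hM2, h_d1_M2, h_d3_M2⟩ := A.exists_line d1 d3 ne_d1_d3
  have n_a_M2 : a ∉ M2 := fun h => n_d3_Lab (by rw [← eq_line hM2 hLab ne_d1_a h_d1_M2 h h_d1_Lab h_a_Lab]; exact h_d3_M2)
  have n_b_M2 : b ∉ M2 := fun h => n_d3_Lab (by rw [← eq_line hM2 hLab ne_d1_b h_d1_M2 h h_d1_Lab h_b_Lab]; exact h_d3_M2)
  have n_xab_M2 : xab ∉ M2 := fun h => n_d3_Lab (by rw [← eq_line hM2 hLab (Ne.symm ne_xab_d1) h_d1_M2 h h_d1_Lab h_xab_Lab]; exact h_d3_M2)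
  have n_c_M2 : c ∉ M2 := fun h => n_d3_Lcd (by rw [← eq_line hM2 hLcd ne_d1_c h_d1_M2 h h_d1_Lcd h_c_Lcd]; exact h_d3_M2)
  have n_d_M2 : d ∉ M2 := fun h => n_d3_Lcd (by rw [← eq_line hM2 hLcd ne_d1_d h_d1_M2 h h_d1_Lcd h_d_Lcd]; exact h_d3_M2)
  have n_xcd_M2 : xcd ∉ M2 := fun h => n_d3_Lcd (by rw [← eq_line hM2 hLcd (Ne.symm ne_xcd_d1) h_d1_M2 h h_d1_Lcd h_xcd_Lcd]; exact h_d3_M2)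
  have n_xad_M2 : xad ∉ M2 := fun h => n_d1_Lad (by rw [← eq_line hM2 hLad (Ne.symm ne_xad_d3) h_d3_M2 h h_d3_Lad h_xad_Lad]; exact h_d1_M2)
  have n_xbc_M2 : xbc ∉ M2 := fun h => n_d1_Lbc (by rw [← eq_line hM2 hLbc (Ne.symm ne_xbc_d3) h_d3_M2 h h_d3_Lbc h_xbc_Lbc]; exact h_d1_M2)
  have n_d2_M2 : d2 ∉ M2 := fun h => ncol_ddd M2 hM2 h_d1_M2 h h_d3_M2
  have hsub_M2 : M2 ⊆ ({d1, d3, xac, xbd} : Set X) := by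
    intro z hz
    have hzu := Set.mem_univ z
    rw [huniv] at hzu
    simp only [Set.mem_insert_iff, Set.mem_singleton_iff] at hzu ⊢
    rcases hzu with rfl|rfl|rfl|rfl|rfl|rfl|rfl|rfl|rfl|rfl|rfl|rfl|rfl
    · exact absurd hz n_a_M2
    · exact absurd hz n_b_M2
    · exact absurd hz n_c_M2
    · exact absurd hz n_d_M2
    · simp
    · exact absurd hz n_d2_M2
    · simp
    · exact absurd hz n_xab_M2
    · simp
    · exact absurd hz n_xad_M2
    · exact absurd hz n_xbc_M2
    · simp
    · exact absurd hz n_xcd_M2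
  have heq_M2 : M2 = ({d1, d3, xac, xbd} : Set X) := Set.Finite.eq_of_subset_of_encard_le (line_finite hA hM2) hsub_M2 (by rw [encard4 ne_d1_d3 (Ne.symm ne_xac_d1) (Ne.symm ne_xbd_d1) (Ne.symm ne_xac_d3) (Ne.symm ne_xbd_d3) ne_xac_xbd , line_encard hA hM2])
  have h_xac_M2 : xac ∈ M2 := by rw [heq_M2]; simp
  have h_xbd_M2 : xbd ∈ M2 := by rw [heq_M2]; simp
  obtain ⟨M3, hM3, h_d2_M3, h_d3_M3⟩ := A.exists_line d2 d3 ne_d2_d3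
  have n_a_M3 : a ∉ M3 := fun h => n_d3_Lac (by rw [← eq_line hM3 hLac ne_d2_a h_d2_M3 h h_d2_Lac h_a_Lac]; exact h_d3_M3)
  have n_c_M3 : c ∉ M3 := fun h => n_d3_Lac (by rw [← eq_line hM3 hLac ne_d2_c h_d2_M3 h h_d2_Lac h_c_Lac]; exact h_d3_M3)
  have n_xac_M3 : xac ∉ M3 := fun h => n_d3_Lac (by rw [← eq_line hM3 hLac (Ne.symm ne_xac_d2) h_d2_M3 h h_d2_Lac h_xac_Lac]; exact h_d3_M3)
  have n_b_M3 : b ∉ M3 := fun h => n_d3_Lbd (by rw [← eq_line hM3 hLbd ne_d2_b h_d2_M3 h h_d2_Lbd h_b_Lbd]; exact h_d3_M3)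
  have n_d_M3 : d ∉ M3 := fun h => n_d3_Lbd (by rw [← eq_line hM3 hLbd ne_d2_d h_d2_M3 h h_d2_Lbd h_d_Lbd]; exact h_d3_M3)
  have n_xbd_M3 : xbd ∉ M3 := fun h => n_d3_Lbd (by rw [← eq_line hM3 hLbd (Ne.symm ne_xbd_d2) h_d2_M3 h h_d2_Lbd h_xbd_Lbd]; exact h_d3_M3)
  have n_xad_M3 : xad ∉ M3 := fun h => n_d2_Lad (by rw [← eq_line hM3 hLad (Ne.symm ne_xad_d3) h_d3_M3 h h_d3_Lad h_xad_Lad]; exact h_d2_M3)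
  have n_xbc_M3 : xbc ∉ M3 := fun h => n_d2_Lbc (by rw [← eq_line hM3 hLbc (Ne.symm ne_xbc_d3) h_d3_M3 h h_d3_Lbc h_xbc_Lbc]; exact h_d2_M3)
  have n_d1_M3 : d1 ∉ M3 := fun h => ncol_ddd M3 hM3 h h_d2_M3 h_d3_M3
  have hsub_M3 : M3 ⊆ ({d2, d3, xab, xcd} : Set X) := by
    intro z hz
    have hzu := Set.mem_univ z
    rw [huniv] at hzu
    simp only [Set.mem_insert_iff, Set.mem_singleton_iff] at hzu ⊢
    rcases hzu with rfl|rfl|rfl|rfl|rfl|rfl|rfl|rfl|rfl|rfl|rfl|rfl|rfl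
    · exact absurd hz n_a_M3
    · exact absurd hz n_b_M3
    · exact absurd hz n_c_M3
    · exact absurd hz n_d_M3
    · exact absurd hz n_d1_M3
    · simp
    · simp
    · simp
    · exact absurd hz n_xac_M3
    · exact absurd hz n_xad_M3
    · exact absurd hz n_xbc_M3
    · exact absurd hz n_xbd_M3
    · simp
  have heq_M3 : M3 = ({d2, d3, xab, xcd} : Set X) := Set.Finite.eq_of_subset_of_encard_le (line_finite hA hM3) hsub_M3 (by rw [encard4 ne_d2_d3 (Ne.symm ne_xab_d2) (Ne.symm ne_xcd_d2) (Ne.symm ne_xab_d3) (Ne.symm ne_xcd_d3) ne_xab_xcd , line_encard hA hM3])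
  have h_xab_M3 : xab ∈ M3 := by rw [heq_M3]; simp
  have h_xcd_M3 : xcd ∈ M3 := by rw [heq_M3]; simp
  have hnodup : ([a, b, c, d, d1, d2, d3, xab, xac, xad, xbc, xbd, xcd] : List X).Nodup := by
    simp only [List.nodup_cons, List.mem_cons, List.not_mem_nil, or_false, not_or, List.nodup_nil, and_true, not_false_eq_true, List.mem_singleton]
    exact ⟨⟨ne_a_b, ne_a_c, ne_a_d, (Ne.symm ne_d1_a), (Ne.symm ne_d2_a), (Ne.symm ne_d3_a), (Ne.symm ne_xab_a), (Ne.symm ne_xac_a), (Ne.symm ne_xad_a), (Ne.symm ne_xbc_a), (Ne.symm ne_xbd_a), (Ne.symm ne_xcd_a)⟩, ⟨ne_b_c, ne_b_d, (Ne.symm ne_d1_b), (Ne.symm ne_d2_b), (Ne.symm ne_d3_b), (Ne.symm ne_xab_b), (Ne.symm ne_xac_b), (Ne.symm ne_xad_b), (Ne.symm ne_xbc_b), (Ne.symm ne_xbd_b), (Ne.symm ne_xcd_b)⟩, ⟨ne_c_d, (Ne.symm ne_d1_c), (Ne.symm ne_d2_c), (Ne.symm ne_d3_c), (Ne.symm ne_xab_c),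 (Ne.symm ne_xac_c), (Ne.symm ne_xad_c), (Ne.symm ne_xbc_c), (Ne.symm ne_xbd_c), (Ne.symm ne_xcd_c)⟩, ⟨(Ne.symm ne_d1_d), (Ne.symm ne_d2_d), (Ne.symm ne_d3_d), (Ne.symm ne_xab_d), (Ne.symm ne_xac_d), (Ne.symm ne_xad_d), (Ne.symm ne_xbc_d), (Ne.symm ne_xbd_d), (Ne.symm ne_xcd_d)⟩, ⟨ne_d1_d2, ne_d1_d3, (Ne.symm ne_xab_d1), (Ne.symm ne_xac_d1), (Ne.symm ne_xad_d1), (Ne.symm ne_xbc_d1), (Ne.symm ne_xbd_d1), (Ne.symm ne_xcd_d1)⟩, ⟨ne_d2_d3, (Ne.symm ne_xab_d2), (Ne.symm ne_xac_d2), (Ne.symm ne_xad_d2), (Ne.symm ne_xbc_d2), (Ne.symm ne_xbd_d2), (Ne.symm ne_xcd_d2)⟩, ⟨(Ne.symm ne_xab_d3), (Ne.symm ne_xac_d3), (Ne.symm ne_xad_d3), (Ne.symm ne_xbc_d3), (Ne.symm ne_xbd_d3), (Ne.symm ne_xcd_d3)⟩, ⟨ne_xab_xac, ne_xab_xad, ne_xab_xbc,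 ne_xab_xbd, ne_xab_xcd⟩, ⟨ne_xac_xad, ne_xac_xbc, ne_xac_xbd, ne_xac_xcd⟩, ⟨ne_xad_xbc, ne_xad_xbd, ne_xad_xcd⟩, ⟨ne_xbc_xbd, ne_xbc_xcd⟩, ne_xbd_xcd⟩
  have hlen : ([a, b, c, d, d1, d2, d3, xab, xac, xad, xbc, xbd, xcd] : List X).length = 13 := rfl
  refine ⟨fun i : Fin 13 => ([a, b, c, d, d1, d2, d3, xab, xac, xad, xbc, xbd, xcd] : List X).get (Fin.cast hlen.symm i), ⟨?_, ?_⟩, ?_, rfl, rfl, rfl, rfl, ⟨Lab, hLab, h_a_Lab, h_b_Lab, h_d1_Lab, h_xab_Lab⟩, ⟨Lcd, hLcd, h_c_Lcd, h_d_Lcd, h_d1_Lcd⟩, ne_xab_a, ne_xab_b, ne_xab_d1⟩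
  · intro i j hij
    have h2 := List.nodup_iff_injective_get.mp hnodup hij
    have h3 := congrArg Fin.val h2
    simp only [Fin.coe_cast] at h3
    exact Fin.ext h3
  · intro x
    have hx := Set.mem_univ x
    rw [huniv] at hx
    simp only [Set.mem_insert_iff, Set.mem_singleton_iff] at hx
    rcases hx with rfl|rfl|rfl|rfl|rfl|rfl|rfl|rfl|rfl|rfl|rfl|rfl|rfl
    · exact ⟨0, rfl⟩
    · exact ⟨1, rfl⟩
    · exact ⟨2, rfl⟩
    · exact ⟨3, rfl⟩
    · exact ⟨4, rfl⟩
    · exact ⟨5, rfl⟩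
    · exact ⟨6, rfl⟩
    · exact ⟨7, rfl⟩
    · exact ⟨8, rfl⟩
    · exact ⟨9, rfl⟩
    · exact ⟨10, rfl⟩
    · exact ⟨11, rfl⟩
    · exact ⟨12, rfl⟩
  · have hlines : ∀ l ∈ clines, ((fun i : Fin 13 => ([a, b, c, d, d1, d2, d3, xab, xac, xad, xbc, xbd, xcd] : List X).get (Fin.cast hlen.symm i)) '' (↑l : Set (Fin 13))) ∈ A.lines := by
      intro l hl
      simp only [clines, List.mem_cons, List.not_mem_nil, or_false] at hl
      rcases hl with rfl|rfl|rfl|rfl|rfl|rfl|rfl|rfl|rfl|rfl|rfl|rfl|rfl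
      · have himg : ((↑({0,1,4,7} : Finset (Fin 13)) : Set (Fin 13))) = {(0 : Fin 13), 1, 4, 7} := by ext t; simp
        rw [himg, Set.image_insert_eq, Set.image_insert_eq, Set.image_insert_eq, Set.image_singleton]
        have : ({a, b, d1, xab} : Set X) ∈ A.lines := by rw [← heq_Lab]; exact hLab
        exact this
      · have himg : ((↑({0,2,5,8} : Finset (Fin 13)) : Set (Fin 13))) = {(0 : Fin 13), 2, 5, 8} := by ext t; simp
        rw [himg, Set.image_insert_eq, Set.image_insert_eq, Set.image_insert_eq, Set.image_singleton]
        have : ({a, c, d2, xac} : Set X) ∈ A.lines := by rw [← heq_Lac]; exact hLac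
        exact this
      · have himg : ((↑({0,3,6,9} : Finset (Fin 13)) : Set (Fin 13))) = {(0 : Fin 13), 3, 6, 9} := by ext t; simp
        rw [himg, Set.image_insert_eq, Set.image_insert_eq, Set.image_insert_eq, Set.image_singleton]
        have : ({a, d, d3, xad} : Set X) ∈ A.lines := by rw [← heq_Lad]; exact hLad
        exact this
      · have himg : ((↑({1,2,6,10} : Finset (Fin 13)) : Set (Fin 13))) = {(1 : Fin 13), 2, 6, 10} := by ext t; simp
        rw [himg, Set.image_insert_eq, Set.image_insert_eq, Set.image_insert_eq, Set.image_singleton]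
        have : ({b, c, d3, xbc} : Set X) ∈ A.lines := by rw [← heq_Lbc]; exact hLbc
        exact this
      · have himg : ((↑({1,3,5,11} : Finset (Fin 13)) : Set (Fin 13))) = {(1 : Fin 13), 3, 5, 11} := by ext t; simp
        rw [himg, Set.image_insert_eq, Set.image_insert_eq, Set.image_insert_eq, Set.image_singleton]
        have : ({b, d, d2, xbd} : Set X) ∈ A.lines := by rw [← heq_Lbd]; exact hLbd
        exact this
      · have himg : ((↑({2,3,4,12} : Finset (Fin 13)) : Set (Fin 13))) = {(2 : Fin 13), 3, 4, 12} := by ext t; simp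
        rw [himg, Set.image_insert_eq, Set.image_insert_eq, Set.image_insert_eq, Set.image_singleton]
        have : ({c, d, d1, xcd} : Set X) ∈ A.lines := by rw [← heq_Lcd]; exact hLcd
        exact this
      · have himg : ((↑({0,10,11,12} : Finset (Fin 13)) : Set (Fin 13))) = {(0 : Fin 13), 10, 11, 12} := by ext t; simp
        rw [himg, Set.image_insert_eq, Set.image_insert_eq, Set.image_insert_eq, Set.image_singleton]
        have : ({a, xbc, xbd, xcd} : Set X) ∈ A.lines := by rw [← heq_La]; exact hLa
        exact this
      · have himg : ((↑({1,8,9,12} : Finset (Fin 13)) : Set (Fin 13))) = {(1 : Fin 13), 8, 9, 12} := by ext t; simp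
        rw [himg, Set.image_insert_eq, Set.image_insert_eq, Set.image_insert_eq, Set.image_singleton]
        have : ({b, xac, xad, xcd} : Set X) ∈ A.lines := by rw [← heq_Lb]; exact hLb
        exact this
      · have himg : ((↑({2,7,9,11} : Finset (Fin 13)) : Set (Fin 13))) = {(2 : Fin 13), 7, 9, 11} := by ext t; simp
        rw [himg, Set.image_insert_eq, Set.image_insert_eq, Set.image_insert_eq, Set.image_singleton]
        have : ({c, xab, xad, xbd} : Set X) ∈ A.lines := by rw [← heq_Lc]; exact hLc
        exact this
      · have himg : ((↑({3,7,8,10} : Finset (Fin 13)) : Set (Fin 13))) = {(3 : Fin 13), 7, 8, 10} := by ext t; simp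
        rw [himg, Set.image_insert_eq, Set.image_insert_eq, Set.image_insert_eq, Set.image_singleton]
        have : ({d, xab, xac, xbc} : Set X) ∈ A.lines := by rw [← heq_Ld]; exact hLd
        exact this
      · have himg : ((↑({4,5,9,10} : Finset (Fin 13)) : Set (Fin 13))) = {(4 : Fin 13), 5, 9, 10} := by ext t; simp
        rw [himg, Set.image_insert_eq, Set.image_insert_eq, Set.image_insert_eq, Set.image_singleton]
        have : ({d1, d2, xad, xbc} : Set X) ∈ A.lines := by rw [← heq_M1]; exact hM1
        exact this
      · have himg : ((↑({4,6,8,11} : Finset (Fin 13)) : Set (Fin 13))) = {(4 : Fin 13), 6, 8, 11} := by ext t; simp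
        rw [himg, Set.image_insert_eq, Set.image_insert_eq, Set.image_insert_eq, Set.image_singleton]
        have : ({d1, d3, xac, xbd} : Set X) ∈ A.lines := by rw [← heq_M2]; exact hM2
        exact this
      · have himg : ((↑({5,6,7,12} : Finset (Fin 13)) : Set (Fin 13))) = {(5 : Fin 13), 6, 7, 12} := by ext t; simp
        rw [himg, Set.image_insert_eq, Set.image_insert_eq, Set.image_insert_eq, Set.image_singleton]
        have : ({d2, d3, xab, xcd} : Set X) ∈ A.lines := by rw [← heq_M3]; exact hM3
        exact this
    intro i j k
    constructor
    · rintro ⟨l, hl, hi, hj, hk⟩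
      exact ⟨_, hlines l hl, Set.mem_image_of_mem _ hi, Set.mem_image_of_mem _ hj,
        Set.mem_image_of_mem _ hk⟩
    · intro hcol
      by_cases hij : i = j
      · subst hij
        obtain ⟨l, hl, hi, hk⟩ := cover i k
        exact ⟨l, hl, hi, hi, hk⟩
      by_cases hik : i = k
      · subst hik
        obtain ⟨l, hl, hi, hj⟩ := cover i j
        exact ⟨l, hl, hi, hj, hi⟩
      obtain ⟨l, hl, hi, hj⟩ := cover i j
      obtain ⟨L0, hL0, hc1, hc2, hc3⟩ := hcol
      have hinj2 : Function.Injective (fun i : Fin 13 => ([a, b, c, d, d1, d2, d3, xab, xac, xad, xbc, xbd, xcd] : List X).get (Fin.cast hlen.symm i)) := by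
        intro i' j' hij'
        have h2 := List.nodup_iff_injective_get.mp hnodup hij'
        have h3 := congrArg Fin.val h2
        simp only [Fin.coe_cast] at h3
        exact Fin.ext h3
      have hne : (fun i : Fin 13 => ([a, b, c, d, d1, d2, d3, xab, xac, xad, xbc, xbd, xcd] : List X).get (Fin.cast hlen.symm i)) i ≠ (fun i : Fin 13 => ([a, b, c, d, d1, d2, d3, xab, xac, xad, xbc, xbd, xcd] : List X).get (Fin.cast hlen.symm i)) j := fun h => hij (hinj2 h)
      have heqL : L0 = _ '' (↑l : Set (Fin 13)) := eq_line hL0 (hlines l hl) hne hc1 hc2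
        (Set.mem_image_of_mem _ hi) (Set.mem_image_of_mem _ hj)
      rw [heqL] at hc3
      obtain ⟨k', hk', hek⟩ := hc3
      have hkk : k' = k := hinj2 hek
      exact ⟨l, hl, hi, hj, by rw [← hkk]; exact hk'⟩
end PG23
namespace PG23
open Set Function

variable {X : Type u} {A : LinSpace X}

theorem auto_of_labelings {e e' : Fin 13 → X}
    (he : Function.Bijective e) (he' : Function.Bijective e')
    (hiff : ∀ i j k, R i j k ↔ Collin A (e i) (e j) (e k))
    (hiff' : ∀ i j k, R i j k ↔ Collin A (e' i) (e' j) (e' k)) :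
    ∃ g : X → X, IsAuto A g ∧ ∀ i, g (e i) = e' i := by
  classical
  let E := Equiv.ofBijective e he
  refine ⟨fun x => e' (E.symm x), ⟨he'.comp E.symm.bijective, ?_⟩, fun i => ?_⟩
  · intro x y z
    have hx : e (E.symm x) = x := E.apply_symm_apply x
    have hy : e (E.symm y) = y := E.apply_symm_apply y
    have hz : e (E.symm z) = z := E.apply_symm_apply z
    have h1 := hiff (E.symm x) (E.symm y) (E.symm z)
    rw [hx, hy, hz] at h1
    exact h1.symm.trans (hiff' _ _ _)
  · show e' (E.symm (e i)) = e' i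
    congr 1
    exact E.symm_apply_apply i

theorem fourindep_quad (h : FourIndep A) : ∃ a b c d : X, Quad A a b c d := by
  obtain ⟨a, b, c, d, h1, h2, h3, h4, h5, h6, hcol⟩ := h
  exact ⟨a, b, c, d, h1, h2, h3, h4, h5, h6,
    hcol a b c (by simp) (by simp) (by simp) h1 h2 h4,
    hcol a b d (by simp) (by simp) (by simp) h1 h3 h5,
    hcol a c d (by simp) (by simp) (by simp) h2 h3 h6,
    hcol b c d (by simp) (by simp) (by simp) h4 h5 h6⟩

theorem exists_some_line (hA : IsPG2_3 A) (x : X) : ∃ L ∈ A.lines, x ∈ L := by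
  obtain ⟨a, b, c, d, hq⟩ := fourindep_quad hA.1.2
  by_cases h : x = a
  · obtain ⟨L, hL, h1, _⟩ := A.exists_line a b hq.1
    exact ⟨L, hL, by rw [h]; exact h1⟩
  · obtain ⟨L, hL, h1, _⟩ := A.exists_line x a h
    exact ⟨L, hL, h1⟩

theorem ncollin_distinct (hA : IsPG2_3 A) {x y z : X} (h : ¬Collin A x y z) :
    x ≠ y ∧ x ≠ z ∧ y ≠ z := by
  refine ⟨?_, ?_, ?_⟩
  · intro he; subst he
    by_cases hxz : x = z
    · subst hxz
      obtain ⟨L, hL, h1⟩ := exists_some_line hA x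
      exact h ⟨L, hL, h1, h1, h1⟩
    · obtain ⟨L, hL, h1, h2⟩ := A.exists_line x z hxz
      exact h ⟨L, hL, h1, h1, h2⟩
  · intro he; subst he
    by_cases hxy : x = y
    · subst hxy
      obtain ⟨L, hL, h1⟩ := exists_some_line hA x
      exact h ⟨L, hL, h1, h1, h1⟩
    · obtain ⟨L, hL, h1, h2⟩ := A.exists_line x y hxy
      exact h ⟨L, hL, h1, h2, h1⟩
  · intro he; subst he
    by_cases hxy : x = y
    · subst hxy
      obtain ⟨L, hL, h1⟩ := exists_some_line hA x
      exact h ⟨L, hL, h1, h1, h1⟩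
    · obtain ⟨L, hL, h1, h2⟩ := A.exists_line x y hxy
      exact h ⟨L, hL, h1, h2, h2⟩

theorem exists_line_avoiding (hA : IsPG2_3 A) (u v : X) (huv : u ≠ v) :
    ∃ M ∈ A.lines, u ∈ M ∧ v ∉ M := by
  obtain ⟨L, hL, hu, hv⟩ := A.exists_line u v huv
  obtain ⟨w, hw⟩ := exists_off hA hL
  have huw : u ≠ w := fun h => hw (by rw [← h]; exact hu)
  obtain ⟨M, hM, hu', hw'⟩ := A.exists_line u w huw
  refine ⟨M, hM, hu', fun hvM => hw ?_⟩
  rw [← eq_line hM hL huv hu' hvM hu hv]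
  exact hw'

theorem exists_line_not_through (hA : IsPG2_3 A) (v : X) : ∃ M ∈ A.lines, v ∉ M := by
  obtain ⟨a, b, c, d, hq⟩ := fourindep_quad hA.1.2
  by_cases h : v = a
  · obtain ⟨M, hM, h1, h2⟩ := A.exists_line b c hq.2.2.2.1
    refine ⟨M, hM, fun hv => ?_⟩
    exact hq.2.2.2.2.2.2.1 ⟨M, hM, by rw [← h]; exact hv, h1, h2⟩
  · obtain ⟨M, hM, _, hv⟩ := exists_line_avoiding hA a v (fun h' => h h'.symm)
    exact ⟨M, hM, hv⟩

theorem extras_quad (hA : IsPG2_3 A) {x y z u p : X} {lxy lxz lyz : Set X}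
    (hlxy : lxy ∈ A.lines) (hlxz : lxz ∈ A.lines) (hlyz : lyz ∈ A.lines)
    (hxy : x ≠ y) (hxz : x ≠ z) (hyz : y ≠ z)
    (hx1 : x ∈ lxy) (hy1 : y ∈ lxy) (hx2 : x ∈ lxz) (hz2 : z ∈ lxz)
    (hy3 : y ∈ lyz) (hz3 : z ∈ lyz)
    (hzxy : z ∉ lxy) (hyxz : y ∉ lxz) (hxyz : x ∉ lyz)
    (hu : u ∈ lxz) (hux : u ≠ x) (huz : u ≠ z)
    (hp : p ∈ lxy) (hpx : p ≠ x) (hpy : p ≠ y) : Quad A u p z y := by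
  have hne1 : lxy ≠ lxz := fun h => hzxy (by rw [h]; exact hz2)
  have hne2 : lxy ≠ lyz := fun h => hzxy (by rw [h]; exact hz3)
  have hne3 : lxz ≠ lyz := fun h => hyxz (by rw [h]; exact hy3)
  have hplxz : p ∉ lxz := fun h => hpx (meet_unique hlxy hlxz hne1 hp h hx1 hx2)
  have hulxy : u ∉ lxy := fun h => hux (meet_unique hlxy hlxz hne1 h hu hx1 hx2)
  have hplyz : p ∉ lyz := fun h => hpy (meet_unique hlxy hlyz hne2 hp h hy1 hy3)
  refine ⟨?_, ?_, ?_, ?_, ?_, hyz.symm, ?_, ?_, ?_, ?_⟩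
  · exact fun h => hplxz (by rw [← h]; exact hu)
  · exact huz
  · exact fun h => hyxz (by rw [← h]; exact hu)
  · exact fun h => hplxz (by rw [h]; exact hz2)
  · exact hpy
  · rintro ⟨L, hL, a1, a2, a3⟩
    have : L = lxz := eq_line hL hlxz huz a1 a3 hu hz2
    exact hplxz (by rw [← this]; exact a2)
  · rintro ⟨L, hL, a1, a2, a3⟩
    have hLxy : L = lxy := eq_line hL hlxy hpy a2 a3 hp hy1
    exact hulxy (by rw [← hLxy]; exact a1)
  · rintro ⟨L, hL, a1, a2, a3⟩
    have : L = lxz := eq_line hL hlxz huz a1 a2 hu hz2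
    exact hyxz (by rw [← this]; exact a3)
  · rintro ⟨L, hL, a1, a2, a3⟩
    have : L = lyz := eq_line hL hlyz hyz a3 a2 hy3 hz3
    exact hplyz (by rw [← this]; exact a1)

end PG23
namespace PG23
open Set Function

variable {X : Type u} {A : LinSpace X}

theorem no_quad_degenerate (hA : IsPG2_3 A) {S : Set X}
    (hnq : ∀ a ∈ S, ∀ b ∈ S, ∀ c ∈ S, ∀ d ∈ S, ¬Quad A a b c d) :
    ∃ l ∈ A.lines, ∃ p, p ∉ l ∧ S ⊆ l ∪ {p} := by
  classical
  by_cases htri : ∃ x ∈ S, ∃ y ∈ S, ∃ z ∈ S, ¬Collin A x y z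
  · obtain ⟨x, hx, y, hy, z, hz, hncol⟩ := htri
    obtain ⟨hxy, hxz, hyz⟩ := ncollin_distinct hA hncol
    obtain ⟨lxy, hlxy, hx1, hy1⟩ := A.exists_line x y hxy
    obtain ⟨lxz, hlxz, hx2, hz2⟩ := A.exists_line x z hxz
    obtain ⟨lyz, hlyz, hy3, hz3⟩ := A.exists_line y z hyz
    have hzxy : z ∉ lxy := fun h => hncol ⟨lxy, hlxy, hx1, hy1, h⟩
    have hyxz : y ∉ lxz := fun h => hncol ⟨lxz, hlxz, hx2, h, hz2⟩
    have hxyz : x ∉ lyz := fun h => hncol ⟨lyz, hlyz, h, hy3, hz3⟩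
    have hcover : ∀ q ∈ S, q ∈ lxy ∨ q ∈ lxz ∨ q ∈ lyz := by
      intro q hq
      by_contra hnp
      push_neg at hnp
      obtain ⟨np1, np2, np3⟩ := hnp
      refine hnq x hx y hy z hz q hq ⟨hxy, hxz, ?_, hyz, ?_, ?_, hncol, ?_, ?_, ?_⟩
      · exact fun h => np1 (by rw [← h]; exact hx1)
      · exact fun h => np1 (by rw [← h]; exact hy1)
      · exact fun h => np2 (by rw [← h]; exact hz2)
      · rintro ⟨L, hL, a1, a2, a3⟩
        have : L = lxy := eq_line hL hlxy hxy a1 a2 hx1 hy1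
        exact np1 (by rw [← this]; exact a3)
      · rintro ⟨L, hL, a1, a2, a3⟩
        have : L = lxz := eq_line hL hlxz hxz a1 a2 hx2 hz2
        exact np2 (by rw [← this]; exact a3)
      · rintro ⟨L, hL, a1, a2, a3⟩
        have : L = lyz := eq_line hL hlyz hyz a1 a2 hy3 hz3
        exact np3 (by rw [← this]; exact a3)
    by_cases hU : ∃ u ∈ S, u ∈ lxz ∧ u ≠ x ∧ u ≠ z
    · obtain ⟨u, hu, hul, hux, huz⟩ := hU
      refine ⟨lxz, hlxz, y, hyxz, ?_⟩
      intro q hq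
      rcases hcover q hq with h1 | h2 | h3
      · by_cases hqx : q = x
        · exact Or.inl (by rw [hqx]; exact hx2)
        by_cases hqy : q = y
        · exact Or.inr (by rw [hqy]; rfl)
        exact absurd (extras_quad hA hlxy hlxz hlyz hxy hxz hyz hx1 hy1 hx2 hz2 hy3 hz3
          hzxy hyxz hxyz hul hux huz h1 hqx hqy) (hnq u hu q hq z hz y hy)
      · exact Or.inl h2
      · by_cases hqz : q = z
        · exact Or.inl (by rw [hqz]; exact hz2)
        by_cases hqy : q = y
        · exact Or.inr (by rw [hqy]; rfl)
        exact absurd (extras_quad hA hlxz hlyz hlxy hxz.symm hyz.symm hxy hz2 hx2 hz3 hy3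
          hx1 hy1 hyxz hxyz hzxy h3 hqz hqy hul huz hux) (hnq q hq u hu y hy x hx)
    · by_cases hW : ∃ w ∈ S, w ∈ lyz ∧ w ≠ y ∧ w ≠ z
      · obtain ⟨w, hw, hwl, hwy, hwz⟩ := hW
        refine ⟨lyz, hlyz, x, hxyz, ?_⟩
        intro q hq
        rcases hcover q hq with h1 | h2 | h3
        · by_cases hqy : q = y
          · exact Or.inl (by rw [hqy]; exact hy3)
          by_cases hqx : q = x
          · exact Or.inr (by rw [hqx]; rfl)
          exact absurd (extras_quad hA hlxy hlyz hlxz hxy.symm hyz hxz hy1 hx1 hy3 hz3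
            hx2 hz2 hzxy hxyz hyxz hwl hwy hwz h1 hqy hqx) (hnq w hw q hq z hz x hx)
        · by_cases hqx : q = x
          · exact Or.inr (by rw [hqx]; rfl)
          by_cases hqz : q = z
          · exact Or.inl (by rw [hqz]; exact hz3)
          exact absurd ⟨q, hq, h2, hqx, hqz⟩ hU
        · exact Or.inl h3
      · refine ⟨lxy, hlxy, z, hzxy, ?_⟩
        intro q hq
        rcases hcover q hq with h1 | h2 | h3
        · exact Or.inl h1
        · by_cases hqx : q = x
          · exact Or.inl (by rw [hqx]; exact hx1)
          by_cases hqz : q = z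
          · exact Or.inr (by rw [hqz]; rfl)
          exact absurd ⟨q, hq, h2, hqx, hqz⟩ hU
        · by_cases hqy : q = y
          · exact Or.inl (by rw [hqy]; exact hy1)
          by_cases hqz : q = z
          · exact Or.inr (by rw [hqz]; rfl)
          exact absurd ⟨q, hq, h3, hqy, hqz⟩ hW
  · push_neg at htri
    by_cases h2 : ∃ x ∈ S, ∃ y ∈ S, x ≠ y
    · obtain ⟨x, hx, y, hy, hxy⟩ := h2
      obtain ⟨l, hl, hx1, hy1⟩ := A.exists_line x y hxy
      obtain ⟨p, hp⟩ := exists_off hA hl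
      refine ⟨l, hl, p, hp, ?_⟩
      intro q hq
      obtain ⟨L, hL, a1, a2, a3⟩ := htri x hx y hy q hq
      have : L = l := eq_line hL hl hxy a1 a2 hx1 hy1
      exact Or.inl (by rw [← this]; exact a3)
    · push_neg at h2
      obtain ⟨a, b, c, d, hq0⟩ := fourindep_quad hA.1.2
      obtain ⟨l, hl, ha1, _⟩ := A.exists_line a b hq0.1
      by_cases hS : ∃ s, s ∈ S
      · obtain ⟨s, hs⟩ := hS
        by_cases hsl : s ∈ l
        · obtain ⟨p, hp⟩ := exists_off hA hl
          exact ⟨l, hl, p, hp, fun q hq => Or.inl (by rw [h2 q hq s hs]; exact hsl)⟩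
        · exact ⟨l, hl, s, hsl, fun q hq => Or.inr (by rw [h2 q hq s hs]; rfl)⟩
      · push_neg at hS
        obtain ⟨p, hp⟩ := exists_off hA hl
        exact ⟨l, hl, p, hp, fun q hq => absurd hq (hS q)⟩

theorem ext_lemma (hA : IsPG2_3 A) {l M : Set X}
    (hl : l ∈ A.lines) (hM : M ∈ A.lines) {T : Set X} (hT : T ⊆ l) {f : X → X}
    (hinj : Set.InjOn f T) (him : ∀ x ∈ T, f x ∈ M) :
    ∃ F : X → X, Set.InjOn F l ∧ (∀ x ∈ l, F x ∈ M) ∧ ∀ x ∈ T, F x = f x := by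
  classical
  have hlfin : l.Finite := line_finite hA hl
  have hMfin : M.Finite := line_finite hA hM
  have hfT : (f '' T) ⊆ M := by rintro _ ⟨x, hx, rfl⟩; exact him x hx
  have hl4 : l.ncard = 4 := by rw [Set.ncard_def, line_encard hA hl]; rfl
  have hM4 : M.ncard = 4 := by rw [Set.ncard_def, line_encard hA hM]; rfl
  have hTfin : T.Finite := hlfin.subset hT
  have hfTfin : (f '' T).Finite := hTfin.image f
  have h1 : (l \ T).ncard = (M \ f '' T).ncard := by
    rw [Set.ncard_diff hT hTfin, Set.ncard_diff hfT hfTfin, hl4, hM4,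
      Set.ncard_image_of_injOn hinj]
  have hd1 : (l \ T).Finite := hlfin.diff
  have hd2 : (M \ f '' T).Finite := hMfin.diff
  have hcard : hd1.toFinset.card = hd2.toFinset.card := by
    rw [← Set.ncard_eq_toFinset_card _ hd1, ← Set.ncard_eq_toFinset_card _ hd2]
    exact h1
  let φ := Finset.equivOfCardEq hcard
  let F : X → X := fun x =>
    if hx : x ∈ hd1.toFinset then ((φ ⟨x, hx⟩ : hd2.toFinset) : X) else f x
  have hFdiff : ∀ x ∈ l \ T, F x ∈ M \ f '' T := by
    intro x hx
    have hx' : x ∈ hd1.toFinset := hd1.mem_toFinset.mpr hx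
    have : F x = ((φ ⟨x, hx'⟩ : hd2.toFinset) : X) := dif_pos hx'
    rw [this]
    exact hd2.mem_toFinset.mp (φ ⟨x, hx'⟩).2
  have hFT : ∀ x ∈ T, F x = f x := by
    intro x hx
    have hx' : x ∉ hd1.toFinset := fun h => (hd1.mem_toFinset.mp h).2 hx
    exact dif_neg hx'
  refine ⟨F, ?_, ?_, hFT⟩
  · intro x hxl y hyl hxy
    by_cases hx1 : x ∈ T <;> by_cases hy1 : y ∈ T
    · rw [hFT x hx1, hFT y hy1] at hxy
      exact hinj hx1 hy1 hxy
    · have hyd : y ∈ l \ T := ⟨hyl, hy1⟩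
      have h2 := hFdiff y hyd
      rw [← hxy, hFT x hx1] at h2
      exact absurd ⟨x, hx1, rfl⟩ h2.2
    · have hxd : x ∈ l \ T := ⟨hxl, hx1⟩
      have h2 := hFdiff x hxd
      rw [hxy, hFT y hy1] at h2
      exact absurd ⟨y, hy1, rfl⟩ h2.2
    · have hxd : x ∈ hd1.toFinset := hd1.mem_toFinset.mpr ⟨hxl, hx1⟩
      have hyd : y ∈ hd1.toFinset := hd1.mem_toFinset.mpr ⟨hyl, hy1⟩
      rw [show F x = ((φ ⟨x, hxd⟩ : hd2.toFinset) : X) from dif_pos hxd,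
        show F y = ((φ ⟨y, hyd⟩ : hd2.toFinset) : X) from dif_pos hyd] at hxy
      have := φ.injective (Subtype.coe_injective hxy)
      exact congrArg Subtype.val this
  · intro x hxl
    by_cases hx1 : x ∈ T
    · rw [hFT x hx1]; exact him x hx1
    · exact (hFdiff x ⟨hxl, hx1⟩).1

theorem config_labeling (hA : IsPG2_3 A) {l : Set X} (hl : l ∈ A.lines) {u1 u2 u3 u4 v : X}
    (h12 : u1 ≠ u2) (h13 : u1 ≠ u3) (h14 : u1 ≠ u4) (h23 : u2 ≠ u3) (h24 : u2 ≠ u4)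
    (h34 : u3 ≠ u4) (hleq : l = {u1, u2, u3, u4}) (hv : v ∉ l) :
    ∃ e : Fin 13 → X, Function.Bijective e ∧
      (∀ i j k, R i j k ↔ Collin A (e i) (e j) (e k)) ∧
      e 0 = u1 ∧ e 1 = u2 ∧ e 2 = v ∧ e 4 = u3 ∧ e 7 = u4 := by
  have hu1l : u1 ∈ l := by rw [hleq]; simp
  have hu2l : u2 ∈ l := by rw [hleq]; simp
  have hu3l : u3 ∈ l := by rw [hleq]; simp
  have hu4l : u4 ∈ l := by rw [hleq]; simp
  have hvu3 : v ≠ u3 := fun h => hv (by rw [h]; exact hu3l)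
  obtain ⟨m, hm, hvm, hu3m⟩ := A.exists_line v u3 hvu3
  have hml : m ≠ l := fun h => hv (by rw [← h]; exact hvm)
  have hwne : (m \ ({v, u3} : Set X)).Nonempty := by
    rcases Set.eq_empty_or_nonempty (m \ ({v, u3} : Set X)) with he | hne
    · exfalso
      have hsub : ({v, u3} : Set X) ⊆ m := by
        intro t ht
        simp only [Set.mem_insert_iff, Set.mem_singleton_iff] at ht
        rcases ht with rfl | rfl <;> assumption
      have h0 := Set.encard_diff_add_encard_of_subset hsub
      rw [he, Set.encard_empty, Set.encard_pair hvu3, line_encard hA hm] at h0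
      norm_num at h0
    · exact hne
  obtain ⟨w, hwm, hwn⟩ := hwne
  obtain ⟨hwv, hwu3⟩ : w ≠ v ∧ w ≠ u3 := by
    simpa [Set.mem_insert_iff, not_or] using hwn
  have hwl : w ∉ l := fun hwl => hwu3 (meet_unique hm hl hml hwm hwl hu3m hu3l)
  have hq : Quad A u1 u2 v w := by
    refine ⟨h12, ?_, ?_, ?_, ?_, Ne.symm hwv, ?_, ?_, ?_, ?_⟩
    · exact fun h => hv (by rw [← h]; exact hu1l)
    · exact fun h => hwl (by rw [← h]; exact hu1l)
    · exact fun h => hv (by rw [← h]; exact hu2l)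
    · exact fun h => hwl (by rw [← h]; exact hu2l)
    · rintro ⟨L, hL, a1, a2, a3⟩
      have : L = l := eq_line hL hl h12 a1 a2 hu1l hu2l
      exact hv (by rw [← this]; exact a3)
    · rintro ⟨L, hL, a1, a2, a3⟩
      have : L = l := eq_line hL hl h12 a1 a2 hu1l hu2l
      exact hwl (by rw [← this]; exact a3)
    · rintro ⟨L, hL, a1, a2, a3⟩
      have hLm : L = m := eq_line hL hm (Ne.symm hwv) a2 a3 hvm hwm
      have : u1 = u3 := meet_unique hm hl hml (by rw [← hLm]; exact a1) hu1l hu3m hu3l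
      exact h13 this
    · rintro ⟨L, hL, a1, a2, a3⟩
      have hLm : L = m := eq_line hL hm (Ne.symm hwv) a2 a3 hvm hwm
      have : u2 = u3 := meet_unique hm hl hml (by rw [← hLm]; exact a1) hu2l hu3m hu3l
      exact h23 this
  obtain ⟨e, hbij, hiff, he0, he1, he2, he3, ⟨L1, hL1, hL1u1, hL1u2, hL1e4, hL1e7⟩,
    ⟨L2, hL2, hL2v, hL2w, hL2e4⟩, hne7a, hne7b, hne74⟩ := labeling hA hq
  have hL1l : L1 = l := eq_line hL1 hl h12 hL1u1 hL1u2 hu1l hu2l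
  have hL2m : L2 = m := eq_line hL2 hm (Ne.symm hwv) hL2v hL2w hvm hwm
  have he4 : e 4 = u3 := meet_unique hm hl hml (by rw [← hL2m]; exact hL2e4)
    (by rw [← hL1l]; exact hL1e4) hu3m hu3l
  have he7l : e 7 ∈ l := by rw [← hL1l]; exact hL1e7
  have he7 : e 7 = u4 := by
    rw [hleq] at he7l
    simp only [Set.mem_insert_iff, Set.mem_singleton_iff] at he7l
    rcases he7l with h | h | h | h
    · exact absurd h hne7a
    · exact absurd h hne7b
    · rw [← he4] at h; exact absurd h hne74
    · exact h
  exact ⟨e, hbij, hiff, he0, he1, he2, he4, he7⟩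

end PG23
/-- The projective plane of order 3 (over F₃, with 13 points and lines of 4
points each) is homogeneous. -/
theorem stmt8 {X : Type u} (A : LinSpace X) (hA : IsPG2_3 A) :
    Homogeneous A := by
  intro S _hS f hinj hf
  classical
  by_cases hqex : ∃ a ∈ S, ∃ b ∈ S, ∃ c ∈ S, ∃ d ∈ S, PG23.Quad A a b c d
  · obtain ⟨a, ha, b, hb, c, hc, d, hd, hq⟩ := hqex
    obtain ⟨n1, n2, n3, n4, n5, n6, m1, m2, m3, m4⟩ := hq
    have hq : PG23.Quad A a b c d := ⟨n1, n2, n3, n4, n5, n6, m1, m2, m3, m4⟩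
    have hfq : PG23.Quad A (f a) (f b) (f c) (f d) :=
      ⟨fun h => n1 (hinj ha hb h), fun h => n2 (hinj ha hc h), fun h => n3 (hinj ha hd h),
        fun h => n4 (hinj hb hc h), fun h => n5 (hinj hb hd h), fun h => n6 (hinj hc hd h),
        fun h => m1 ((hf a ha b hb c hc).mpr h), fun h => m2 ((hf a ha b hb d hd).mpr h),
        fun h => m3 ((hf a ha c hc d hd).mpr h), fun h => m4 ((hf b hb c hc d hd).mpr h)⟩
    obtain ⟨e, he, hiff, he0, he1, he2, he3, -, -, -, -, -⟩ := PG23.labeling hA hq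
    obtain ⟨e', he', hiff', he0', he1', he2', he3', -, -, -, -, -⟩ := PG23.labeling hA hfq
    obtain ⟨g, hg, hge⟩ := PG23.auto_of_labelings he he' hiff hiff'
    refine ⟨g, hg, ?_⟩
    intro p hp
    obtain ⟨i, hi⟩ := he.2 p
    obtain ⟨j, hj⟩ := he'.2 (f p)
    have pat : ∀ (u v : Fin 13) (pu pv : X), e u = pu → e' u = f pu → e v = pv →
        e' v = f pv → pu ∈ S → pv ∈ S → (PG23.R i u v ↔ PG23.R j u v) := by
      intro u v pu pv h1 h2 h3 h4 hpu hpv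
      calc PG23.R i u v ↔ Collin A (e i) (e u) (e v) := hiff i u v
        _ ↔ Collin A p pu pv := by rw [hi, h1, h3]
        _ ↔ Collin A (f p) (f pu) (f pv) := hf p hp pu hpu pv hpv
        _ ↔ Collin A (e' j) (e' u) (e' v) := by rw [hj, h2, h4]
        _ ↔ PG23.R j u v := (hiff' j u v).symm
    have hij : i = j := PG23.pattern_unique i j
      (pat 0 1 a b he0 he0' he1 he1' ha hb)
      (pat 0 2 a c he0 he0' he2 he2' ha hc)
      (pat 0 3 a d he0 he0' he3 he3' ha hd)
      (pat 1 2 b c he1 he1' he2 he2' hb hc)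
      (pat 1 3 b d he1 he1' he3 he3' hb hd)
      (pat 2 3 c d he2 he2' he3 he3' hc hd)
    have hgp : g p = e' i := by rw [← hi]; exact hge i
    rw [hgp, hij, hj]
  · push_neg at hqex
    obtain ⟨l, hl, p, hpl, hSsub⟩ := PG23.no_quad_degenerate hA hqex
    have hMex : ∃ M ∈ A.lines, (∀ x ∈ S ∩ l, f x ∈ M) ∧ (p ∈ S → f p ∉ M) := by
      by_cases h2 : ∃ x ∈ S ∩ l, ∃ y ∈ S ∩ l, x ≠ y
      · obtain ⟨x, hx, y, hy, hxy⟩ := h2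
        have hfxy : f x ≠ f y := fun h => hxy (hinj hx.1 hy.1 h)
        obtain ⟨M, hM, hfx, hfy⟩ := A.exists_line (f x) (f y) hfxy
        refine ⟨M, hM, ?_, ?_⟩
        · intro z hz
          by_cases hzx : z = x
          · rw [hzx]; exact hfx
          by_cases hzy : z = y
          · rw [hzy]; exact hfy
          have hcol : Collin A x y z := ⟨l, hl, hx.2, hy.2, hz.2⟩
          obtain ⟨L, hL, c1, c2, c3⟩ := (hf x hx.1 y hy.1 z hz.1).mp hcol
          have : L = M := PG23.eq_line hL hM hfxy c1 c2 hfx hfy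
          rw [← this]; exact c3
        · intro hpS hfpM
          have hcol : Collin A (f x) (f y) (f p) := ⟨M, hM, hfx, hfy, hfpM⟩
          obtain ⟨L, hL, c1, c2, c3⟩ := (hf x hx.1 y hy.1 p hpS).mpr hcol
          have : L = l := PG23.eq_line hL hl hxy c1 c2 hx.2 hy.2
          exact hpl (by rw [← this]; exact c3)
      · push_neg at h2
        by_cases hTx : ∃ x, x ∈ S ∩ l
        · obtain ⟨x, hx⟩ := hTx
          by_cases hpS : p ∈ S
          · have hxp : x ≠ p := fun h => hpl (by rw [← h]; exact hx.2)
            have hfxp : f x ≠ f p := fun h => hxp (hinj hx.1 hpS h)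
            obtain ⟨M, hM, hfx, hfp⟩ := PG23.exists_line_avoiding hA (f x) (f p) hfxp
            exact ⟨M, hM, fun z hz => by rw [h2 z hz x hx]; exact hfx, fun _ => hfp⟩
          · obtain ⟨M, hM, hfx⟩ := PG23.exists_some_line hA (f x)
            exact ⟨M, hM, fun z hz => by rw [h2 z hz x hx]; exact hfx,
              fun h => absurd h hpS⟩
        · push_neg at hTx
          by_cases hpS : p ∈ S
          · obtain ⟨M, hM, hfp⟩ := PG23.exists_line_not_through hA (f p)
            exact ⟨M, hM, fun z hz => absurd hz (hTx z), fun _ => hfp⟩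
          · obtain ⟨a0, b0, c0, d0, hq0⟩ := PG23.fourindep_quad hA.1.2
            obtain ⟨M, hM, _, _⟩ := A.exists_line a0 b0 hq0.1
            exact ⟨M, hM, fun z hz => absurd hz (hTx z), fun h => absurd h hpS⟩
    obtain ⟨M, hM, hfTM, hfpM⟩ := hMex
    obtain ⟨F, hFinj, hFM, hFT⟩ := PG23.ext_lemma hA hl hM Set.inter_subset_right
      (hinj.mono Set.inter_subset_left) hfTM
    obtain ⟨u1, u2, u3, u4, d12, d13, d14, d23, d24, d34, hleq⟩ := PG23.line_decomp hA hl
    have hu1l : u1 ∈ l := by rw [hleq]; simp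
    have hu2l : u2 ∈ l := by rw [hleq]; simp
    have hu3l : u3 ∈ l := by rw [hleq]; simp
    have hu4l : u4 ∈ l := by rw [hleq]; simp
    have hF12 : F u1 ≠ F u2 := fun h => d12 (hFinj hu1l hu2l h)
    have hF13 : F u1 ≠ F u3 := fun h => d13 (hFinj hu1l hu3l h)
    have hF14 : F u1 ≠ F u4 := fun h => d14 (hFinj hu1l hu4l h)
    have hF23 : F u2 ≠ F u3 := fun h => d23 (hFinj hu2l hu3l h)
    have hF24 : F u2 ≠ F u4 := fun h => d24 (hFinj hu2l hu4l h)
    have hF34 : F u3 ≠ F u4 := fun h => d34 (hFinj hu3l hu4l h)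
    have hMeq : M = {F u1, F u2, F u3, F u4} := by
      refine (Set.Finite.eq_of_subset_of_encard_le' (PG23.line_finite hA hM) ?_ ?_).symm
      · intro z hz
        simp only [Set.mem_insert_iff, Set.mem_singleton_iff] at hz
        rcases hz with rfl | rfl | rfl | rfl
        · exact hFM u1 hu1l
        · exact hFM u2 hu2l
        · exact hFM u3 hu3l
        · exact hFM u4 hu4l
      · rw [PG23.encard4 hF12 hF13 hF14 hF23 hF24 hF34, PG23.line_encard hA hM]
    have hv : ∃ v', v' ∉ M ∧ (p ∈ S → v' = f p) := by
      by_cases hpS : p ∈ S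
      · exact ⟨f p, hfpM hpS, fun _ => rfl⟩
      · obtain ⟨v', hv'⟩ := PG23.exists_off hA hM
        exact ⟨v', hv', fun h => absurd h hpS⟩
    obtain ⟨v', hv'M, hv'p⟩ := hv
    obtain ⟨e, he, hiff, he0, he1, he2, he4, he7⟩ :=
      PG23.config_labeling hA hl d12 d13 d14 d23 d24 d34 hleq hpl
    obtain ⟨e', he', hiff', he0', he1', he2', he4', he7'⟩ :=
      PG23.config_labeling hA hM hF12 hF13 hF14 hF23 hF24 hF34 hMeq hv'M
    obtain ⟨g, hg, hge⟩ := PG23.auto_of_labelings he he' hiff hiff'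
    refine ⟨g, hg, ?_⟩
    intro q hq
    rcases hSsub hq with hql | hqp
    · have hqT : q ∈ S ∩ l := ⟨hq, hql⟩
      rw [hleq] at hql
      simp only [Set.mem_insert_iff, Set.mem_singleton_iff] at hql
      rcases hql with rfl | rfl | rfl | rfl
      · calc g q = g (e 0) := by rw [he0]
          _ = e' 0 := hge 0
          _ = F q := he0'
          _ = f q := hFT q hqT
      · calc g q = g (e 1) := by rw [he1]
          _ = e' 1 := hge 1
          _ = F q := he1'
          _ = f q := hFT q hqT
      · calc g q = g (e 4) := by rw [he4]
          _ = e' 4 := hge 4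
          _ = F q := he4'
          _ = f q := hFT q hqT
      · calc g q = g (e 7) := by rw [he7]
          _ = e' 7 := hge 7
          _ = F q := he7'
          _ = f q := hFT q hqT
    · have hqp' : q = p := hqp
      subst hqp'
      calc g q = g (e 2) := by rw [he2]
        _ = e' 2 := hge 2
        _ = v' := he2'
        _ = f q := hv'p hq
end

section
/- If L_1, ..., L_n (n ≥ 3) are pairwise parallel lines in a linear space A, then there is a one-point extension A' = A ∪ {a} which is again a linear space, in which all the lines extending L_1,...,L_n pass through the new point a. -/
open Set Function

universe u v w

/-
A family `P` of pairwise parallel lines is turned into a pencil through a new point `∞`: each line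
of `P` gets `∞` added, every other line is kept, and each point on no line of `P` is joined to `∞`
by a new two-point line. Two old points still span the extension of their old line, and a point `x`
spans with `∞` the unique extended line of `P` through `x`, or the new line `{x, ∞}`; disjointness
of the lines of `P` is exactly what makes two extended lines meet only in `∞`.
-/

namespace LinSpace

variable {X : Type u} (A : LinSpace X)

theorem nonempty_of_mem_lines {L : Set X} (hL : L ∈ A.lines) : L.Nonempty := by
  rw [← Set.encard_pos]
  exact lt_of_lt_of_le (by norm_num) (A.two_le L hL)

theorem exists_mem_lines_of_mem_lines {L : Set X} (hL : L ∈ A.lines) (x : X) :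
    ∃ M ∈ A.lines, x ∈ M := by
  obtain ⟨p, hp⟩ := A.nonempty_of_mem_lines hL
  by_cases hxp : x = p
  · exact ⟨L, hL, hxp ▸ hp⟩
  · obtain ⟨M, hM, hxM, -⟩ := A.exists_line x p hxp
    exact ⟨M, hM, hxM⟩

end LinSpace

section LiftSet

variable {X : Type u}

/-- The set of `X ⊕ Unit` that meets `X` in `M` and contains the new point iff `c`. -/
def liftSet (M : Set X) (c : Prop) : Set (X ⊕ Unit) :=
  Sum.elim M fun _ => c

variable {M M' : Set X} {c c' : Prop}

theorem liftSet_inter : liftSet M c ∩ liftSet M' c' = liftSet (M ∩ M') (c ∧ c') := by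
  ext (x | u) <;> rfl

theorem liftSet_subsingleton (hM : M.Subsingleton) (hc : c → M = ∅) :
    (liftSet M c).Subsingleton := by
  rintro (x | u) hx (y | v) hy
  · rw [hM hx hy]
  · exact absurd hx (hc hy ▸ Set.notMem_empty x)
  · exact absurd hy (hc hx ▸ Set.notMem_empty y)
  · rfl

theorem encard_le_encard_liftSet : M.encard ≤ (liftSet M c).encard := by
  rw [← Sum.inl_injective.encard_image]
  exact Set.encard_mono fun _ ⟨_, hx, hxp⟩ => hxp ▸ hx

end LiftSet

namespace LinSpace

variable {X : Type u} (A : LinSpace X) (P : Set (Set X))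

def extensionLines : Set (Set (X ⊕ Unit)) :=
  {N | ∃ M ∈ A.lines, N = liftSet M (M ∈ P)} ∪ {N | ∃ x ∉ ⋃₀ P, N = liftSet {x} True}

variable {A P}

theorem liftSet_mem_extensionLines {M : Set X} (hM : M ∈ A.lines) :
    liftSet M (M ∈ P) ∈ A.extensionLines P :=
  Or.inl ⟨M, hM, rfl⟩

theorem two_le_encard_of_mem_extensionLines {N : Set (X ⊕ Unit)} (hN : N ∈ A.extensionLines P) :
    2 ≤ N.encard := by
  rcases hN with ⟨M, hM, rfl⟩ | ⟨x, -, rfl⟩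
  · exact (A.two_le M hM).trans encard_le_encard_liftSet
  · rw [← Set.encard_pair (Sum.inl_ne_inr (b := ()))]
    refine Set.encard_mono ?_
    rintro _ (rfl | rfl) <;> trivial

theorem exists_extensionLine_inl_inr (hP : P ⊆ A.lines) (x : X) :
    ∃ N ∈ A.extensionLines P, Sum.inl x ∈ N ∧ Sum.inr () ∈ N := by
  by_cases hx : x ∈ ⋃₀ P
  · obtain ⟨M, hMP, hxM⟩ := hx
    exact ⟨_, liftSet_mem_extensionLines (hP hMP), hxM, hMP⟩
  · exact ⟨_, Or.inr ⟨x, hx, rfl⟩, rfl, trivial⟩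

theorem exists_extensionLine (hP : P ⊆ A.lines) {p q : X ⊕ Unit} (hpq : p ≠ q) :
    ∃ N ∈ A.extensionLines P, p ∈ N ∧ q ∈ N := by
  rcases p with x | ⟨⟩ <;> rcases q with y | ⟨⟩
  · obtain ⟨M, hM, hxM, hyM⟩ := A.exists_line x y fun h => hpq (congrArg _ h)
    exact ⟨_, liftSet_mem_extensionLines hM, hxM, hyM⟩
  · exact exists_extensionLine_inl_inr hP x
  · obtain ⟨N, hN, hyN, hN'⟩ := exists_extensionLine_inl_inr hP y
    exact ⟨N, hN, hN', hyN⟩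
  · exact absurd rfl hpq

theorem inter_subsingleton_of_mem_extensionLines (hdisj : P.PairwiseDisjoint id)
    {N₁ N₂ : Set (X ⊕ Unit)} (hN₁ : N₁ ∈ A.extensionLines P) (hN₂ : N₂ ∈ A.extensionLines P)
    (hne : N₁ ≠ N₂) : (N₁ ∩ N₂).Subsingleton := by
  rcases hN₁ with ⟨M₁, hM₁, rfl⟩ | ⟨x, hx, rfl⟩ <;>
    rcases hN₂ with ⟨M₂, hM₂, rfl⟩ | ⟨y, hy, rfl⟩ <;>
    rw [liftSet_inter] <;> refine liftSet_subsingleton ?_ ?_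
  -- for each kind of pair: the old points form a subsingleton, empty if `∞` is common
  · exact A.inter_subsingleton M₁ hM₁ M₂ hM₂ fun h => hne (h ▸ rfl)
  · rintro ⟨h₁, h₂⟩
    exact (hdisj h₁ h₂ fun h => hne (h ▸ rfl)).inter_eq
  · exact Set.subsingleton_singleton.anti Set.inter_subset_right
  · rintro ⟨hM₁, -⟩
    exact Set.eq_empty_of_forall_notMem fun z ⟨hz, rfl⟩ => hy ⟨M₁, hM₁, hz⟩
  · exact Set.subsingleton_singleton.anti Set.inter_subset_left
  · rintro ⟨-, hM₂⟩
    exact Set.eq_empty_of_forall_notMem fun z ⟨rfl, hz⟩ => hx ⟨M₂, hM₂, hz⟩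
  · exact Set.subsingleton_singleton.anti Set.inter_subset_left
  · rintro -
    exact Set.eq_empty_of_forall_notMem fun z ⟨rfl, hz⟩ => hne (hz ▸ rfl)

variable (A) in
def pointExtension (hP : P ⊆ A.lines) (hdisj : P.PairwiseDisjoint id) : LinSpace (X ⊕ Unit) where
  lines := A.extensionLines P
  two_le _ := two_le_encard_of_mem_extensionLines
  exists_line _ _ := exists_extensionLine hP
  inter_subsingleton _ hN₁ _ hN₂ := inter_subsingleton_of_mem_extensionLines hdisj hN₁ hN₂

theorem isEmbedding_inl_pointExtension (hP : P ⊆ A.lines) (hdisj : P.PairwiseDisjoint id)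
    (hpt : ∀ x, ∃ M ∈ A.lines, x ∈ M) : IsEmbedding A (A.pointExtension hP hdisj) Sum.inl := by
  refine ⟨Sum.inl_injective, fun x y z => ⟨?_, ?_⟩⟩
  · rintro ⟨M, hM, hxyz⟩
    exact ⟨_, liftSet_mem_extensionLines hM, hxyz⟩
  · rintro ⟨N, ⟨M, hM, rfl⟩ | ⟨w, -, rfl⟩, hxyz⟩
    · exact ⟨M, hM, hxyz⟩
    -- `x`, `y`, `z` all equal `w`, which is collinear with itself only if it lies on a line
    · obtain ⟨M, hM, hwM⟩ := hpt w
      obtain ⟨rfl, rfl, rfl⟩ : x = w ∧ y = w ∧ z = w := hxyz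
      exact ⟨M, hM, hwM, hwM, hwM⟩

end LinSpace

/-- If `L 0, …, L (n-1)` (with `n ≥ 3`) are pairwise parallel lines in a linear
space `A`, there is a one-point extension of `A` in which the lines extending
all the `L i` pass through the new point. -/
theorem stmt11 {X : Type u} (A : LinSpace X) (n : ℕ) (hn : 3 ≤ n)
    (L : Fin n → Set X) (hL : ∀ i, L i ∈ A.lines)
    (hpar : ∀ i j, i ≠ j → Disjoint (L i) (L j)) :
    ∃ A' : LinSpace (X ⊕ Unit),
      IsEmbedding A A' Sum.inl ∧
      ∀ i : Fin n, ∃ M ∈ A'.lines, Sum.inl '' (L i) ⊆ M ∧ Sum.inr () ∈ M := by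
  have hP : range L ⊆ A.lines := range_subset_iff.2 hL
  have hdisj : (range L).PairwiseDisjoint id := Pairwise.range_pairwise hpar
  refine ⟨A.pointExtension hP hdisj, LinSpace.isEmbedding_inl_pointExtension hP hdisj
    (A.exists_mem_lines_of_mem_lines (hL ⟨0, by omega⟩)), fun i => ?_⟩
  refine ⟨_, LinSpace.liftSet_mem_extensionLines (hL i), ?_, mem_range_self i⟩
  rintro _ ⟨x, hx, rfl⟩
  exact hx
end
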